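/- arXiv:1301.6383 — 9 statements merged into one kernel-verified Lean document; each statement's English description precedes it below -/
import Mathlib

section
/- Let I be a set, (A_i)_{i∈I} an I-indexed family of nonempty sets, and h : ∏_{i∈I} A_i → C a map to another set C. Then the collection F = {J ⊆ I : h factors as ∏_{i∈I} A_i → ∏_{i∈J} A_i → C, where the first map is the natural projection} is a filter on I. -/
open Function Set

section DependsOn

variable {ι : Type*} {α : ι → Type*} {β : Type*} {f : (Π i, α i) → β} {s t : Set ι}

theorem DependsOn.inter (hs : DependsOn f s) (ht : DependsOn f t) : DependsOn f (s ∩ t) := by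
  classical
  intro x y hxy
  calc f x = f (s.piecewise x y) := hs fun i hi => (piecewise_eq_of_mem s x y hi).symm
    _ = f y := ht fun i hi => by
      by_cases his : i ∈ s
      · rw [piecewise_eq_of_mem s x y his]
        exact hxy i ⟨his, hi⟩
      · exact piecewise_eq_of_notMem s x y his

def dependsOnFilter (f : (Π i, α i) → β) : Filter ι where
  sets := {s | DependsOn f s}
  univ_sets := dependsOn_univ f
  sets_of_superset hs hst := hs.mono hst
  inter_sets := DependsOn.inter

@[simp]
theorem mem_dependsOnFilter : s ∈ dependsOnFilter f ↔ DependsOn f s :=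
  Iff.rfl

end DependsOn

/-- For a map `h` on a product of nonempty sets, the collection of
subsets `J ⊆ I` such that `h` factors through the projection onto the
subproduct indexed by `J` is a filter on `I`. -/
theorem factorization_sets_form_filter {I : Type u} (A : I → Type v)
    (hA : ∀ i, Nonempty (A i)) {C : Type w} (h : (∀ i, A i) → C) :
    ∃ F : Filter I, ∀ J : Set I,
      J ∈ F ↔ ∃ g : (∀ j : J, A j) → C,
        h = g ∘ (fun (a : ∀ i, A i) (j : J) => a j) := by
  have : Nonempty C := ⟨h fun i => (hA i).some⟩
  exact ⟨dependsOnFilter h, fun J => mem_dependsOnFilter.trans dependsOn_iff_exists_comp⟩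
end

section
/- Let I be a set, F a filter on I, and (A_i)_{i∈I} an I-indexed family of sets each having more than one element. Let h : ∏_{i∈I} A_i → (∏_{i∈I} A_i)/F be the canonical quotient map to the reduced product. Then the filter {J ⊆ I : h factors as ∏_{i∈I} A_i → ∏_{i∈J} A_i → (∏_{i∈I} A_i)/F through the natural projection} equals F. In particular, every filter on I arises in this way from a map on the product. -/
universe u v

/-- The setoid on a dependent product given by a filter: two elements are
related when they agree on a set belonging to the filter. -/
def redSetoid {I : Type u} (F : Filter I) (A : I → Type v) : Setoid (∀ i, A i) where
  r a b := {i | a i = b i} ∈ F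
  iseqv := by
    refine ⟨fun a => ?_, fun {a b} h => ?_, fun {a b c} h₁ h₂ => ?_⟩
    · simp
    · simpa [eq_comm] using h
    · exact Filter.mem_of_superset (Filter.inter_mem h₁ h₂)
        (fun i hi => hi.1.trans hi.2)

/-- The reduced product of a family of sets with respect to a filter. -/
def ReducedProduct {I : Type u} (F : Filter I) (A : I → Type v) : Type (max u v) :=
  Quotient (redSetoid F A)

/-- The canonical quotient map onto a reduced product. -/
def reducedMk {I : Type u} (F : Filter I) (A : I → Type v) (a : ∀ i, A i) :
    ReducedProduct F A :=
  Quotient.mk (redSetoid F A) a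

/-!
The canonical map `h` is constant exactly on pairs agreeing on a set of `F`, and the projection
onto `∏_{j ∈ J} A_j` identifies exactly the pairs agreeing on `J`. So `h` factors through the
projection iff agreement on `J` forces agreement on a set of `F`. Since every `A_i` has two
distinct points, there is a pair agreeing on exactly `J`, so this happens iff `J ∈ F`.
-/

open Function Set

namespace ReducedProduct

variable {I : Type u} {F : Filter I} {A : I → Type v}

theorem reducedMk_eq_reducedMk_iff {a b : ∀ i, A i} :
    reducedMk F A a = reducedMk F A b ↔ {i | a i = b i} ∈ F :=
  Quotient.eq

instance [∀ i, Nonempty (A i)] : Nonempty (ReducedProduct F A) :=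
  ⟨reducedMk F A fun _ => Classical.arbitrary _⟩

theorem factorsThrough_domRestrict_iff (J : Set I) :
    (reducedMk F A).FactorsThrough J.domRestrict ↔
      ∀ a b : ∀ i, A i, (∀ j ∈ J, a j = b j) → {i | a i = b i} ∈ F := by
  simp only [FactorsThrough, domRestrict_eq_iff, reducedMk_eq_reducedMk_iff]
  rfl

end ReducedProduct

theorem Filter.mem_iff_forall_eq_on_imp_setOf_eq_mem {I : Type u} (A : I → Type v)
    [∀ i, Nontrivial (A i)] {F : Filter I} {J : Set I} :
    J ∈ F ↔ ∀ a b : ∀ i, A i, (∀ j ∈ J, a j = b j) → {i | a i = b i} ∈ F := by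
  classical
  refine ⟨fun hJ a b hab => Filter.mem_of_superset hJ hab, fun h => ?_⟩
  choose a b hab using fun i => exists_pair_ne (A i)
  have hJ : {i | a i = J.piecewise a b i} = J := by
    ext i
    by_cases hi : i ∈ J <;> simp [hi, hab i]
  simpa only [hJ] using h a (J.piecewise a b) fun j hj => (J.piecewise_eq_of_mem a b hj).symm

/-- For a filter `F` on `I` and a family of sets `A i` each with
more than one element, the canonical map `h` from the product to the reduced
product `(∏ᵢ Aᵢ)/F` factors through the projection onto the subproduct indexed
by `J ⊆ I` precisely when `J ∈ F`.  Hence every filter arises, as in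
STATEMENT 0, from a map on the product. -/
theorem filter_of_reduced_product_map {I : Type u} (F : Filter I) (A : I → Type v)
    (hA : ∀ i, Nontrivial (A i)) (J : Set I) :
    (∃ g : (∀ j : J, A j) → ReducedProduct F A,
        (fun a => reducedMk F A a) = g ∘ (fun (a : ∀ i, A i) (j : J) => a j))
      ↔ J ∈ F := by
  rw [Filter.mem_iff_forall_eq_on_imp_setOf_eq_mem A,
    ← ReducedProduct.factorsThrough_domRestrict_iff J]
  exact (factorsThrough_iff _).symm
end

section
/- Let I be a set and F a filter on I. Then the following conditions are equivalent: (1) for every partition of I into infinitely many subsets J_s (s ∈ S, S an infinite set) there is at least one s ∈ S with I − J_s ∈ F; (2) for every partition of I into a countably infinite family of subsets J_m (m ∈ ℕ) there is at least one m with I − J_m ∈ F; (3) there exists n ∈ ℕ such that for every partition of I into n+1 subsets J_0, …, J_n there is at least one m ≤ n with I − J_m ∈ F; (4) F is the intersection of finitely many ultrafilters on I. -/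
/-!
Every filter is the intersection of the ultrafilters containing it. If these are finitely many,
say `U₀, …, U_{n-1}`, then each `U_k` contains at most one part of a partition, so a partition
into more than `n` parts has a part lying in no `U_k`, and its complement lies in all of them.
If instead infinitely many ultrafilters contain `F`, a set lying in infinitely many of them
can be split, by a set separating two of them, into a piece lying in one of them and a remainder
still lying in infinitely many. Iterating yields pairwise disjoint sets `A₀, A₁, …`, each in some
ultrafilter containing `F`; enlarging them to a partition (into countably many or into `n + 1`
parts) gives one with no part whose complement is in `F`.
-/

universe u

open Function Set Filter

variable {I : Type*}

namespace Ultrafilter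

theorem injective_of_pairwise_disjoint_mem {ι S : Type*} (U : ι → Ultrafilter I)
    {J : S → Set I} (hJ : Pairwise (Disjoint on J)) {f : S → ι} (hf : ∀ s, J s ∈ U (f s)) :
    Injective f := by
  intro s t hst
  by_contra hne
  have hmem : J s ∩ J t ∈ U (f s) := Filter.inter_mem (hf s) (hst ▸ hf t)
  rw [(hJ hne).inter_eq] at hmem
  exact (U (f s)).empty_notMem hmem

theorem exists_subset_infinite_and_diff_mem (K : Set (Ultrafilter I)) {X : Set I}
    (hX : {U ∈ K | X ∈ U}.Infinite) :
    ∃ Y ⊆ X, {U ∈ K | Y ∈ U}.Infinite ∧ ∃ U ∈ K, X \ Y ∈ U := by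
  obtain ⟨U₀, hU₀, U₁, hU₁, hne⟩ := hX.nontrivial
  obtain ⟨D, hD₀, hD₁⟩ : ∃ D ∈ (U₀ : Filter I), D ∉ U₁ :=
    Filter.not_le.1 fun hle => hne (coe_le_coe.1 hle).symm
  have hsplit : {U ∈ K | X ∈ U} = {U ∈ K | X ∩ D ∈ U} ∪ {U ∈ K | X \ D ∈ U} := by
    ext U
    simp only [mem_ofPred_eq, mem_union, ← and_or_left, ← union_mem_iff, inter_union_sdiff]
  rcases infinite_union.1 (hsplit ▸ hX) with hinf | hinf
  · refine ⟨X ∩ D, inter_subset_left, hinf, U₁, hU₁.1, ?_⟩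
    rw [sdiff_self_inter]
    exact Filter.inter_mem hU₁.2 (compl_mem_iff_notMem.2 hD₁)
  · refine ⟨X \ D, sdiff_subset, hinf, U₀, hU₀.1, ?_⟩
    rw [sdiff_sdiff_right_self]
    exact Filter.inter_mem hU₀.2 hD₀

theorem exists_pairwise_disjoint_mem_of_infinite {K : Set (Ultrafilter I)} (hK : K.Infinite) :
    ∃ A : ℕ → Set I, Pairwise (Disjoint on A) ∧ ∀ m, ∃ U ∈ K, A m ∈ U := by
  choose! Y hYX hYinf hYmem using fun X => exists_subset_infinite_and_diff_mem K (X := X)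
  let X : ℕ → Set I := fun m => Y^[m] univ
  have hX_succ (m : ℕ) : X (m + 1) = Y (X m) := iterate_succ_apply' Y m univ
  have hXinf (m : ℕ) : {U ∈ K | X m ∈ U}.Infinite := by
    induction m with
    | zero => exact hK.mono fun U hU => ⟨hU, Filter.univ_mem⟩
    | succ m ih => exact hX_succ m ▸ hYinf _ ih
  have hXanti : Antitone X :=
    antitone_nat_of_succ_le fun m => hX_succ m ▸ hYX _ (hXinf m)
  refine ⟨fun m => X m \ X (m + 1), (pairwise_disjoint_on _).2 fun m n hmn => ?_, fun m => ?_⟩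
  · exact disjoint_sdiff_left.mono_right (sdiff_subset.trans (hXanti hmn))
  · simpa only [hX_succ] using hYmem _ (hXinf m)

end Ultrafilter

theorem exists_partition_superset {S : Type*} [Nonempty S] (A : S → Set I)
    (hA : Pairwise (Disjoint on A)) :
    ∃ J : S → Set I, Pairwise (Disjoint on J) ∧ (⋃ s, J s) = univ ∧ ∀ s, A s ⊆ J s := by
  obtain ⟨s₀⟩ := ‹Nonempty S›
  refine ⟨fun s => A s ∪ {x | s = s₀ ∧ x ∉ ⋃ t, A t}, fun i j hij => disjoint_left.2 ?_,
    eq_univ_of_forall fun x => ?_, fun s => subset_union_left⟩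
  · rintro x (hi | ⟨rfl, hi⟩) (hj | ⟨rfl, hj⟩)
    · exact disjoint_left.1 (hA hij) hi hj
    · exact hj (mem_iUnion_of_mem i hi)
    · exact hi (mem_iUnion_of_mem j hj)
    · exact hij rfl
  · by_cases hx : x ∈ ⋃ t, A t
    · obtain ⟨t, ht⟩ := mem_iUnion.1 hx
      exact mem_iUnion_of_mem t (Or.inl ht)
    · exact mem_iUnion_of_mem s₀ (Or.inr ⟨rfl, hx⟩)

namespace Filter

def EveryPartitionHasNullPart (F : Filter I) (S : Type*) : Prop :=
  ∀ J : S → Set I, Pairwise (Disjoint on J) → (⋃ s, J s) = univ → ∃ s, (J s)ᶜ ∈ F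

theorem everyPartitionHasNullPart_iSup_ultrafilter {ι S : Type*} (U : ι → Ultrafilter I)
    (hS : ∀ f : S → ι, ¬Injective f) :
    EveryPartitionHasNullPart (⨆ k, (U k : Filter I)) S := by
  intro J hJ _
  by_contra! hnull
  simp only [mem_iSup, not_forall, Ultrafilter.mem_coe, Ultrafilter.compl_notMem_iff] at hnull
  choose f hf using hnull
  exact hS f (Ultrafilter.injective_of_pairwise_disjoint_mem U hJ hf)

variable {F : Filter I}

theorem EveryPartitionHasNullPart.finite_ultrafilters_le {S : Type*}
    [Countable S] [Nonempty S] (h : F.EveryPartitionHasNullPart S) :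
    {U : Ultrafilter I | ↑U ≤ F}.Finite := by
  by_contra hK
  obtain ⟨A, hA, hAK⟩ := Ultrafilter.exists_pairwise_disjoint_mem_of_infinite hK
  obtain ⟨e, he⟩ := Countable.exists_injective_nat S
  obtain ⟨J, hJ, hJcover, hAJ⟩ := exists_partition_superset (A ∘ e) (hA.comp_of_injective he)
  obtain ⟨s, hs⟩ := h J hJ hJcover
  obtain ⟨U, hUF, hU⟩ := hAK (e s)
  exact Ultrafilter.compl_notMem_iff.2 (mem_of_superset hU (hAJ s)) (hUF hs)

theorem exists_eq_iSup_ultrafilter_of_finite (hK : {U : Ultrafilter I | ↑U ≤ F}.Finite) :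
    ∃ (n : ℕ) (U : Fin n → Ultrafilter I), F = ⨆ m, (U m : Filter I) := by
  obtain ⟨n, e, he⟩ := hK.fin_embedding
  refine ⟨n, e, ?_⟩
  calc F = ⨆ U ∈ {U : Ultrafilter I | ↑U ≤ F}, (U : Filter I) := (iSup_ultrafilter_le_eq F).symm
    _ = ⨆ m, (e m : Filter I) := by rw [← he, iSup_range]

theorem EveryPartitionHasNullPart.exists_eq_iSup_ultrafilter {S : Type*}
    [Countable S] [Nonempty S] (h : F.EveryPartitionHasNullPart S) :
    ∃ (n : ℕ) (U : Fin n → Ultrafilter I), F = ⨆ m, (U m : Filter I) :=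
  exists_eq_iSup_ultrafilter_of_finite h.finite_ultrafilters_le

end Filter

/-- For a filter `F` on `I`, the following are equivalent:
(1) for every partition of `I` into infinitely many subsets, the complement of
one of the parts lies in `F`;
(2) the same for partitions into countably infinitely many subsets;
(3) there is `n` such that for every partition of `I` into `n + 1` subsets the
complement of one of the parts lies in `F`;
(4) `F` is the intersection of finitely many ultrafilters on `I`.
(Intersections of filters, as collections of sets, are suprema in the filter
order; the empty intersection is the improper filter `⊥`.) -/
theorem filter_finite_inter_ultrafilters_iff {I : Type u} (F : Filter I) :
    ((∀ (S : Type u) [Infinite S] (J : S → Set I),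
        Pairwise (Disjoint on J) → (⋃ s, J s) = Set.univ →
        ∃ s, (J s)ᶜ ∈ F)
      ↔ (∃ (n : ℕ) (U : Fin n → Ultrafilter I), F = ⨆ m, (U m : Filter I)))
  ∧ ((∀ J : ℕ → Set I,
        Pairwise (Disjoint on J) → (⋃ m, J m) = Set.univ →
        ∃ m, (J m)ᶜ ∈ F)
      ↔ (∃ (n : ℕ) (U : Fin n → Ultrafilter I), F = ⨆ m, (U m : Filter I)))
  ∧ ((∃ n : ℕ, ∀ J : Fin (n + 1) → Set I,
        Pairwise (Disjoint on J) → (⋃ m, J m) = Set.univ →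
        ∃ m, (J m)ᶜ ∈ F)
      ↔ (∃ (n : ℕ) (U : Fin n → Ultrafilter I), F = ⨆ m, (U m : Filter I))) := by
  refine
    ⟨⟨fun h => EveryPartitionHasNullPart.exists_eq_iSup_ultrafilter (S := ULift ℕ) (h _), ?_⟩,
    ⟨EveryPartitionHasNullPart.exists_eq_iSup_ultrafilter (S := ℕ), ?_⟩,
    ⟨fun ⟨n, h⟩ => EveryPartitionHasNullPart.exists_eq_iSup_ultrafilter (S := Fin (n + 1)) h, ?_⟩⟩
    <;> rintro ⟨n, U, rfl⟩
  · exact fun S _ => everyPartitionHasNullPart_iSup_ultrafilter U not_injective_infinite_finite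
  · exact everyPartitionHasNullPart_iSup_ultrafilter U not_injective_infinite_finite
  · refine ⟨n, everyPartitionHasNullPart_iSup_ultrafilter U fun f hf => ?_⟩
    simpa using Fintype.card_le_of_injective f hf
end

section
/- Let I be a set, F a filter on I, and κ an uncountable cardinal. Then the following are equivalent: (1) for every partition of I into fewer than κ subsets J_s (s ∈ S), there exist finitely many indices s_0, …, s_{n-1} ∈ S such that J_{s_0} ∪ … ∪ J_{s_{n-1}} ∈ F; (2) F is the intersection of finitely many κ-complete ultrafilters on I. -/
/-!
A `κ`-complete ultrafilter contains a part of every partition into fewer than `κ` parts, which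
gives (2) ⇒ (1). Conversely, applying (1) to the fibres of suitable maps shows that `F` is
`κ`-complete and, since `κ > ℵ₀`, that there is no infinite disjoint family of `F`-positive sets.
So every positive set contains an atom `X` (a positive set on which `F ⊓ 𝓟 X` is an ultrafilter,
`κ`-complete along with `F`), and a maximal disjoint family of atoms is finite with union in `F`;
`F` is then the intersection of the ultrafilters `F ⊓ 𝓟 X`.
-/

universe u

open Function

def KappaComplete {I : Type u} (κ : Cardinal.{u}) (F : Filter I) : Prop :=
  ∀ 𝒮 : Set (Set I), Cardinal.mk 𝒮 < κ → (∀ s ∈ 𝒮, s ∈ F) → ⋂₀ 𝒮 ∈ F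

open Filter Set
open scoped Cardinal

variable {I : Type u} {F : Filter I} {κ : Cardinal.{u}}

theorem Cardinal.mk_option_lt (hκ : ℵ₀ ≤ κ) {S : Type u} (hS : #S < κ) : #(Option S) < κ := by
  rw [Cardinal.mk_option]
  exact Cardinal.add_lt_of_lt hκ hS (Cardinal.one_lt_aleph0.trans_le hκ)

theorem Filter.eq_iSup_inf_principal {ι : Type*} [Finite ι] {X : ι → Set I}
    (hX : ⋃ i, X i ∈ F) : F = ⨆ i, F ⊓ 𝓟 (X i) := by
  refine le_antisymm (fun s hs => ?_) (iSup_le fun _ => inf_le_left)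
  simp only [mem_iSup, mem_inf_principal'] at hs
  refine mem_of_superset (inter_mem (iInter_mem.2 hs) hX) fun x ⟨hxs, hxX⟩ => ?_
  obtain ⟨i, hi⟩ := mem_iUnion.1 hxX
  exact (mem_iInter.1 hxs i).resolve_left (not_not.2 hi)

theorem KappaComplete.inf_principal (hF : KappaComplete κ F) (X : Set I) :
    KappaComplete κ (F ⊓ 𝓟 X) := by
  intro 𝒮 h𝒮 hmem
  simp only [mem_inf_principal'] at hmem ⊢
  have := hF ((Xᶜ ∪ ·) '' 𝒮) (Cardinal.mk_image_le.trans_lt h𝒮) (forall_mem_image.2 hmem)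
  rwa [sInter_image, ← union_iInter₂, ← sInter_eq_biInter] at this

theorem KappaComplete.exists_mem_of_iUnion_eq_univ {U : Ultrafilter I}
    (hU : KappaComplete κ (U : Filter I)) {S : Type u} {J : S → Set I} (hS : #S < κ)
    (hJ : ⋃ s, J s = univ) : ∃ s, J s ∈ U := by
  by_contra! h
  have := hU (range fun s => (J s)ᶜ) (Cardinal.mk_range_le.trans_lt hS)
    (forall_mem_range.2 fun s => U.compl_mem_iff_notMem.2 (h s))
  rw [sInter_range, ← compl_iUnion, hJ, compl_univ] at this
  exact U.empty_notMem this

def FinitelyCoversSmallPartitions (F : Filter I) (κ : Cardinal.{u}) : Prop :=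
  ∀ (S : Type u) (J : S → Set I), #S < κ → Pairwise (Disjoint on J) → (⋃ s, J s) = univ →
    ∃ t : Finset S, (⋃ s ∈ t, J s) ∈ F

def IsFilterAtom (F : Filter I) (X : Set I) : Prop :=
  Xᶜ ∉ F ∧ ∀ s, (X ∩ s)ᶜ ∈ F ∨ (X ∩ sᶜ)ᶜ ∈ F

namespace IsFilterAtom

variable {X : Set I}

theorem neBot (hX : IsFilterAtom F X) : (F ⊓ 𝓟 X).NeBot :=
  ⟨fun h => hX.1 (inf_principal_eq_bot.1 h)⟩

noncomputable def toUltrafilter (hX : IsFilterAtom F X) : Ultrafilter I :=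
  haveI := hX.neBot
  Ultrafilter.ofComplNotMemIff (F ⊓ 𝓟 X) fun s => by
    refine ⟨fun hs => ?_, compl_notMem⟩
    have hsplit := hX.2 s
    rw [compl_inter, compl_inter, compl_compl] at hsplit
    rw [mem_inf_principal'] at hs ⊢
    exact hsplit.resolve_left hs

@[simp]
theorem coe_toUltrafilter (hX : IsFilterAtom F X) : (hX.toUltrafilter : Filter I) = F ⊓ 𝓟 X :=
  rfl

end IsFilterAtom

namespace FinitelyCoversSmallPartitions

theorem exists_finset_preimage_mem (H : FinitelyCoversSmallPartitions F κ) {S : Type u}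
    (f : I → S) (hS : #S < κ) : ∃ t : Finset S, f ⁻¹' t ∈ F := by
  obtain ⟨t, ht⟩ := H S (fun s => f ⁻¹' {s}) hS
    (fun s s' hss' => (disjoint_singleton.2 hss').preimage f)
    (by rw [← preimage_iUnion, iUnion_singleton_eq_range, range_id', preimage_univ])
  exact ⟨t, by rwa [← Finset.set_biUnion_coe, biUnion_preimage_singleton] at ht⟩

theorem kappaComplete (H : FinitelyCoversSmallPartitions F κ) (hκ : ℵ₀ ≤ κ) :
    KappaComplete κ F := by
  classical
  intro 𝒮 h𝒮 hmem
  let f : I → Option 𝒮 := fun x => if h : ∃ s : 𝒮, x ∉ (s : Set I) then some h.choose else none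
  obtain ⟨t, ht⟩ := H.exists_finset_preimage_mem f (Cardinal.mk_option_lt hκ h𝒮)
  have hB : ⋂ s ∈ t.eraseNone, (s : Set I) ∈ F :=
    (biInter_finset_mem _).2 fun s _ => hmem s s.2
  refine mem_of_superset (inter_mem ht hB) fun x ⟨hxt, hxB⟩ => ?_
  by_contra hx
  have h : ∃ s : 𝒮, x ∉ (s : Set I) := by simpa [mem_sInter] using hx
  have hfx : f x = some h.choose := dif_pos h
  exact h.choose_spec (mem_iInter₂.1 hxB _ (Finset.mem_eraseNone.2 (hfx ▸ hxt)))

theorem finite_of_pairwise_disjoint (H : FinitelyCoversSmallPartitions F κ) (hκ : ℵ₀ ≤ κ)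
    {ι : Type u} {A : ι → Set I} (hι : #ι < κ) (hA : ∀ i, (A i)ᶜ ∉ F)
    (hdisj : Pairwise (Disjoint on A)) : Finite ι := by
  classical
  by_contra! hinf
  let f : I → Option ι := fun x => if h : ∃ i, x ∈ A i then some h.choose else none
  obtain ⟨t, ht⟩ := H.exists_finset_preimage_mem f (Cardinal.mk_option_lt hκ hι)
  obtain ⟨i, hi⟩ := Infinite.exists_notMem_finset t.eraseNone
  refine hA i (mem_of_superset ht fun x hxt hxi => hi ?_)
  have h : ∃ j, x ∈ A j := ⟨i, hxi⟩
  have hchoose : h.choose = i := by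
    by_contra hne
    exact disjoint_left.1 (hdisj hne) h.choose_spec hxi
  have hfx : f x = some i := by rw [← hchoose]; exact dif_pos h
  exact Finset.mem_eraseNone.2 (hfx ▸ hxt)

theorem exists_compl_mem_of_pairwise_disjoint (H : FinitelyCoversSmallPartitions F κ)
    (hκ : ℵ₀ < κ) {A : ℕ → Set I} (hdisj : Pairwise (Disjoint on A)) : ∃ n, (A n)ᶜ ∈ F := by
  by_contra! hA
  have := H.finite_of_pairwise_disjoint hκ.le (A := A ∘ ULift.down) (by simpa using hκ)
    (fun i => hA i.down) fun i j hij => hdisj (ULift.down_injective.ne hij)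
  exact not_finite (ULift.{u} ℕ)

theorem finite_of_pairwiseDisjoint (H : FinitelyCoversSmallPartitions F κ) (hκ : ℵ₀ < κ)
    {𝒜 : Set (Set I)} (hdisj : 𝒜.PairwiseDisjoint id) (hpos : ∀ X ∈ 𝒜, Xᶜ ∉ F) :
    𝒜.Finite := by
  by_contra hinf
  let e := Set.Infinite.natEmbedding 𝒜 hinf
  obtain ⟨n, hn⟩ := H.exists_compl_mem_of_pairwise_disjoint hκ (A := fun n => (e n : Set I))
    fun m n hmn => hdisj (e m).2 (e n).2 (Subtype.coe_injective.ne (e.injective.ne hmn))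
  exact hpos _ (e n).2 hn

theorem exists_isFilterAtom_subset (H : FinitelyCoversSmallPartitions F κ) (hκ : ℵ₀ < κ)
    {X₀ : Set I} (hX₀ : X₀ᶜ ∉ F) : ∃ X ⊆ X₀, IsFilterAtom F X := by
  classical
  by_contra! hno
  have hsplit : ∀ Y, ∃ s, Y ⊆ X₀ → Yᶜ ∉ F → (Y ∩ s)ᶜ ∉ F ∧ (Y ∩ sᶜ)ᶜ ∉ F := fun Y => by
    by_cases hY : Y ⊆ X₀ ∧ Yᶜ ∉ F
    · obtain ⟨s, hs⟩ : ∃ s, (Y ∩ s)ᶜ ∉ F ∧ (Y ∩ sᶜ)ᶜ ∉ F := by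
        simpa [IsFilterAtom, hY.2] using hno Y hY.1
      exact ⟨s, fun _ _ => hs⟩
    · exact ⟨∅, fun h₁ h₂ => (hY ⟨h₁, h₂⟩).elim⟩
  choose split hsplit using hsplit
  -- the pieces `Y n ∩ split (Y n)` cut off the positive sets `Y n` are disjoint and positive
  let Y : ℕ → Set I := fun n => (fun Z => Z ∩ (split Z)ᶜ)^[n] X₀
  have hYsucc : ∀ n, Y (n + 1) = Y n ∩ (split (Y n))ᶜ := fun n => iterate_succ_apply' _ n X₀
  have hY : ∀ n, Y n ⊆ X₀ ∧ (Y n)ᶜ ∉ F := by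
    intro n
    induction n with
    | zero => exact ⟨subset_rfl, hX₀⟩
    | succ n ih =>
      rw [hYsucc]
      exact ⟨inter_subset_left.trans ih.1, (hsplit _ ih.1 ih.2).2⟩
  have hanti : Antitone Y :=
    antitone_nat_of_succ_le fun n => by rw [hYsucc]; exact inter_subset_left
  have hdisj : Pairwise (Disjoint on fun n => Y n ∩ split (Y n)) := by
    refine (pairwise_disjoint_on _).2 fun m n hmn => disjoint_left.2 fun x hxm hxn => ?_
    have hx : x ∈ Y (m + 1) := hanti hmn hxn.1
    rw [hYsucc] at hx
    exact hx.2 hxm.2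
  obtain ⟨n, hn⟩ := H.exists_compl_mem_of_pairwise_disjoint hκ hdisj
  exact (hsplit _ (hY n).1 (hY n).2).1 hn

theorem exists_finite_isFilterAtom_sUnion_mem (H : FinitelyCoversSmallPartitions F κ)
    (hκ : ℵ₀ < κ) : ∃ 𝒜 : Set (Set I), 𝒜.Finite ∧ (∀ X ∈ 𝒜, IsFilterAtom F X) ∧ ⋃₀ 𝒜 ∈ F := by
  obtain ⟨𝒜, h𝒜⟩ :=
    zorn_subset {𝒜 : Set (Set I) | 𝒜.PairwiseDisjoint id ∧ ∀ X ∈ 𝒜, IsFilterAtom F X}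
      fun c hc hchain => ⟨⋃₀ c,
        ⟨(pairwiseDisjoint_sUnion hchain.directedOn).2 fun 𝒜 h𝒜 => (hc h𝒜).1,
          fun X ⟨𝒜, h𝒜, hX⟩ => (hc h𝒜).2 X hX⟩,
        fun _ => subset_sUnion_of_mem⟩
  refine ⟨𝒜, H.finite_of_pairwiseDisjoint hκ h𝒜.1.1 fun X hX => (h𝒜.1.2 X hX).1, h𝒜.1.2, ?_⟩
  by_contra hU
  obtain ⟨X, hXU, hX⟩ := H.exists_isFilterAtom_subset hκ (X₀ := (⋃₀ 𝒜)ᶜ) (by rwa [compl_compl])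
  have hX𝒜 : X ∈ 𝒜 := h𝒜.mem_of_prop_insert ⟨h𝒜.1.1.insert fun Y hY _ =>
    disjoint_compl_left_iff_subset.2 (subset_sUnion_of_mem hY) |>.mono_left hXU,
    forall_mem_insert.2 ⟨hX, h𝒜.1.2⟩⟩
  have hXempty : X = ∅ := subset_empty_iff.1 fun x hx => hXU hx (subset_sUnion_of_mem hX𝒜 hx)
  exact hX.1 (by simp [hXempty])

end FinitelyCoversSmallPartitions

/-- For a filter `F` on `I` and an uncountable cardinal `κ`, the
following are equivalent: (1) for every partition of `I` into fewer than `κ`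
subsets, the union of some finitely many of the parts lies in `F`;
(2) `F` is the intersection of finitely many `κ`-complete ultrafilters on `I`. -/
theorem filter_finite_inter_kappa_complete_ultrafilters_iff {I : Type u}
    (F : Filter I) (κ : Cardinal.{u}) (hκ : Cardinal.aleph0 < κ) :
    (∀ (S : Type u) (J : S → Set I), Cardinal.mk S < κ →
        Pairwise (Disjoint on J) → (⋃ s, J s) = Set.univ →
        ∃ t : Finset S, (⋃ s ∈ t, J s) ∈ F)
  ↔ (∃ (n : ℕ) (U : Fin n → Ultrafilter I),
        (∀ m, KappaComplete κ (U m : Filter I)) ∧ F = ⨆ m, (U m : Filter I)) := by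
  classical
  constructor
  · intro (H : FinitelyCoversSmallPartitions F κ)
    obtain ⟨𝒜, h𝒜fin, h𝒜atom, h𝒜mem⟩ := H.exists_finite_isFilterAtom_sUnion_mem hκ
    obtain ⟨n, X, rfl⟩ := h𝒜fin.fin_embedding
    have hX : ∀ m, IsFilterAtom F (X m) := fun m => h𝒜atom _ (mem_range_self m)
    refine ⟨n, fun m => (hX m).toUltrafilter, fun m => ?_, ?_⟩
    · exact (H.kappaComplete hκ.le).inf_principal (X m)
    · rw [sUnion_range] at h𝒜mem
      simpa using eq_iSup_inf_principal h𝒜mem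
  · rintro ⟨n, U, hU, rfl⟩ S J hS - hJ
    choose s hs using fun m => (hU m).exists_mem_of_iUnion_eq_univ hS hJ
    refine ⟨Finset.univ.image s, mem_iSup.2 fun m => mem_of_superset (hs m) ?_⟩
    exact subset_biUnion_of_mem (Finset.mem_image_of_mem s (Finset.mem_univ m))
end

section
/- Let I be a set, (A_i)_{i∈I} an I-tuple of nonempty sets, and U_0, …, U_{n-1} (n ∈ ℕ) distinct ultrafilters on I. Write A = ∏_{i∈I} A_i. Then the natural map A → A/U_0 × … × A/U_{n-1} (the product of the quotient maps to the ultraproducts) is surjective; equivalently, the natural embedding A/(U_0 ∩ … ∩ U_{n-1}) → A/U_0 × … × A/U_{n-1} is a bijection. -/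
universe u v

/-- The natural embedding of the reduced product with respect to the
intersection `U 0 ∩ … ∩ U (n-1)` (the supremum of the `U m` in the filter
order) into the product of the individual ultraproducts. -/
def interToProd {I : Type u} (A : I → Type v) {n : ℕ} (U : Fin n → Ultrafilter I) :
    ReducedProduct (⨆ m, (U m : Filter I)) A → ∀ m, ReducedProduct (U m : Filter I) A :=
  Quotient.lift (fun a m => reducedMk (U m : Filter I) A a)
    (fun _ _ hab => funext fun m => Quotient.sound (Filter.mem_iSup.mp hab m))

/-- For a family of nonempty sets `(A i)` and finitely many
distinct ultrafilters `U 0, …, U (n-1)` on `I`, the natural map from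
`A = ∏ᵢ Aᵢ` to `A/U 0 × … × A/U (n-1)` is surjective; equivalently, the natural
embedding `A/(U 0 ∩ … ∩ U (n-1)) → A/U 0 × … × A/U (n-1)` is a bijection. -/
theorem surjective_to_finite_product_of_ultraproducts {I : Type u}
    (A : I → Type v) (hA : ∀ i, Nonempty (A i)) {n : ℕ}
    (U : Fin n → Ultrafilter I) (hU : Function.Injective U) :
    Function.Surjective
      (fun (a : ∀ i, A i) (m : Fin n) => reducedMk (U m : Filter I) A a) ∧
    Function.Bijective (interToProd A U) := by
  have surj : Function.Surjective
      (fun (a : ∀ i, A i) (m : Fin n) => reducedMk (U m : Filter I) A a) := by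
    classical
    intro b
    choose f hf using fun m => Quotient.exists_rep (b m)
    -- separating sets
    have sep : ∀ m k : Fin n, ∃ s : Set I, s ∈ U m ∧ (m ≠ k → s ∉ U k) := by
      intro m k
      by_cases hmk : m = k
      · exact ⟨Set.univ, Filter.univ_mem, fun h => absurd hmk h⟩
      · have hne : U m ≠ U k := fun h => hmk (hU h)
        by_contra h
        push_neg at h
        exact hne (Ultrafilter.coe_le_coe.mp fun s hs => (h s hs).2).symm
    choose T hT₁ hT₂ using sep
    set S : Fin n → Set I := fun m => ⋂ k, T m k with hS
    have hSmem : ∀ m, S m ∈ U m := fun m => Filter.iInter_mem.mpr (hT₁ m)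
    have hSnot : ∀ m k, m ≠ k → S m ∉ U k := by
      intro m k hmk hmem
      exact hT₂ m k hmk (Filter.mem_of_superset hmem (Set.iInter_subset _ k))
    set D : Fin n → Set I := fun m => {i | i ∈ S m ∧ ∀ k, k < m → i ∉ S k} with hD
    have hDmem : ∀ m, D m ∈ U m := by
      intro m
      have : D m = S m ∩ ⋂ k ∈ Finset.univ.filter (· < m), (S k)ᶜ := by
        ext i
        simp [hD, Set.mem_iInter]
      rw [this]
      refine Filter.inter_mem (hSmem m) ((Filter.biInter_finset_mem _).mpr ?_)
      intro k hk
      simp only [Finset.mem_filter] at hk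
      exact Ultrafilter.compl_mem_iff_notMem.mpr (hSnot k m (ne_of_lt hk.2))
    have hDdisj : ∀ m m' i, i ∈ D m → i ∈ D m' → m = m' := by
      intro m m' i hm hm'
      by_contra hne
      rcases lt_or_gt_of_ne hne with h | h
      · exact hm'.2 m h hm.1
      · exact hm.2 m' h hm'.1
    refine ⟨fun i => if h : ∃ m, i ∈ D m then f h.choose i else (hA i).some, funext fun m => ?_⟩
    rw [← hf m]
    refine (Quotient.sound ?_ : _ = _)
    refine Filter.mem_of_superset (hDmem m) ?_
    intro i hi
    have hex : ∃ m', i ∈ D m' := ⟨m, hi⟩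
    have : hex.choose = m := hDdisj _ _ i hex.choose_spec hi
    simp only [Set.mem_setOf_eq, dif_pos hex, this]
  refine ⟨surj, ⟨?_, ?_⟩⟩
  · intro x y hxy
    induction x using Quotient.ind
    induction y using Quotient.ind
    refine Quotient.sound (Filter.mem_iSup.mpr fun m => ?_)
    exact Quotient.exact (congrFun hxy m)
  · intro b
    obtain ⟨a, ha⟩ := surj b
    exact ⟨reducedMk _ A a, ha⟩
end

section
/- Let I be a set, (A_i)_{i∈I} a family of groups, C a group, and h : A = ∏_{i∈I} A_i → C a group homomorphism. Then the following are equivalent: (1) for every partition of I into a countably infinite family of subsets J_m (m ∈ ℕ), at least one of the subgroups ∏_{i∈J_m} A_i ⊆ A (consisting of the elements supported in J_m) lies in ker(h); (2) h factors as A → A/U_0 × … × A/U_{n-1} → C, where the first arrow is the product of the quotient maps, for some finite family of ultrafilters U_0, …, U_{n-1} on I. -/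
universe u v w

open Function

section AuxNull

variable {I : Type u} {A : I → Type v} [∀ i, Group (A i)] {C : Type w} [Group C]

/-- A set is null for `h` if elements supported in it are killed by `h`. -/
def IsNullSet (h : (∀ i, A i) →* C) (S : Set I) : Prop :=
  ∀ a : ∀ i, A i, (∀ i, i ∉ S → a i = 1) → h a = 1

variable {h : (∀ i, A i) →* C}

lemma isNullSet_mono {S T : Set I} (hST : S ⊆ T) (hT : IsNullSet h T) :
    IsNullSet h S :=
  fun a ha => hT a fun i hi => ha i fun hiS => hi (hST hiS)

lemma isNullSet_empty : IsNullSet h (∅ : Set I) := by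
  intro a ha
  have : a = 1 := funext fun i => ha i (by simp)
  rw [this, map_one]

lemma isNullSet_union {S T : Set I} (hS : IsNullSet h S) (hT : IsNullSet h T) :
    IsNullSet h (S ∪ T) := by
  classical
  intro a ha
  set b : ∀ i, A i := fun i => if i ∈ S then a i else 1 with hb
  set c : ∀ i, A i := fun i => if i ∈ S then 1 else a i with hc
  have hbc : a = b * c := by
    funext i; by_cases hi : i ∈ S <;> simp [hb, hc, hi]
  have h1 : h b = 1 := hS b fun i hi => by simp [hb, hi]
  have h2 : h c = 1 := by
    refine hT c fun i hi => ?_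
    by_cases hiS : i ∈ S
    · simp [hc, hiS]
    · simp [hc, hiS, ha i fun hmem => hmem.elim hiS hi]
  rw [hbc, map_mul, h1, h2, one_mul]

lemma isNullSet_iUnion_fin : ∀ {n : ℕ} {S : Fin n → Set I},
    (∀ k, IsNullSet h (S k)) → IsNullSet h (⋃ k, S k) := by
  intro n
  induction n with
  | zero =>
    intro S _
    have : (⋃ k, S k) = (∅ : Set I) := by simp
    rw [this]; exact isNullSet_empty
  | succ n ih =>
    intro S hS
    have : (⋃ k, S k) = S 0 ∪ ⋃ k : Fin n, S k.succ := by
      ext i; simp [Fin.exists_fin_succ]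
    rw [this]
    exact isNullSet_union (hS 0) (ih fun k => hS k.succ)

lemma h_eq_of_nullSet {a b : ∀ i, A i} (hD : IsNullSet h {i | a i ≠ b i}) :
    h a = h b := by
  have : h (a * b⁻¹) = 1 := by
    refine hD (a * b⁻¹) fun i hi => ?_
    have : a i = b i := not_not.mp hi
    simp [this]
  have := congrArg (· * h b) this
  simpa [map_mul, map_inv, mul_assoc] using this

/-- From the partition hypothesis: any pairwise disjoint ℕ-family has a null member. -/
lemma exists_null_of_pairwise_disjoint
    (H : ∀ J : ℕ → Set I, Pairwise (Disjoint on J) → (⋃ m, J m) = Set.univ →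
        ∃ m, IsNullSet h (J m))
    (S : ℕ → Set I) (hd : Pairwise (Disjoint on S)) :
    ∃ m, IsNullSet h (S m) := by
  classical
  set J : ℕ → Set I := fun m => Nat.rec (S 0 ∪ (⋃ k, S k)ᶜ) (fun m _ => S (m + 1)) m with hJ
  have hJ0 : J 0 = S 0 ∪ (⋃ k, S k)ᶜ := rfl
  have hJs : ∀ m, J (m + 1) = S (m + 1) := fun m => rfl
  have hsub : ∀ m, S m ⊆ J m := by
    intro m
    cases m with
    | zero => rw [hJ0]; exact Set.subset_union_left
    | succ m => rw [hJs]
  have hdisj : Pairwise (Disjoint on J) := by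
    have key : ∀ m n, m < n → Disjoint (J m) (J n) := by
      intro m n hmn
      cases n with
      | zero => omega
      | succ n =>
        rw [hJs]
        cases m with
        | zero =>
          rw [hJ0]
          refine Disjoint.union_left (hd (by omega)) ?_
          rw [Set.disjoint_left]
          intro i hi hi'
          exact hi (Set.mem_iUnion.mpr ⟨n + 1, hi'⟩)
        | succ m => rw [hJs]; exact hd (by omega)
    intro m n hmn
    rcases lt_or_gt_of_ne hmn with h' | h'
    · exact key m n h'
    · exact (key n m h').symm
  have hcov : (⋃ m, J m) = Set.univ := by
    ext i
    simp only [Set.mem_iUnion, Set.mem_univ, iff_true]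
    by_cases hi : i ∈ ⋃ k, S k
    · obtain ⟨k, hk⟩ := Set.mem_iUnion.mp hi
      exact ⟨k, hsub k hk⟩
    · exact ⟨0, by rw [hJ0]; exact Or.inr hi⟩
  obtain ⟨m, hm⟩ := H J hdisj hcov
  exact ⟨m, isNullSet_mono (hsub m) hm⟩

/-- An atom: a non-null set all of whose subsets are null or co-null inside it. -/
def IsNullAtom (h : (∀ i, A i) →* C) (S : Set I) : Prop :=
  ¬ IsNullSet h S ∧ ∀ T ⊆ S, IsNullSet h T ∨ IsNullSet h (S \ T)

lemma exists_atom_subset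
    (H : ∀ J : ℕ → Set I, Pairwise (Disjoint on J) → (⋃ m, J m) = Set.univ →
        ∃ m, IsNullSet h (J m))
    {S : Set I} (hS : ¬ IsNullSet h S) : ∃ T ⊆ S, IsNullAtom h T := by
  classical
  by_contra hno
  push_neg at hno
  have split : ∀ T : {T : Set I // T ⊆ S ∧ ¬ IsNullSet h T},
      ∃ Y ⊆ T.1, ¬ IsNullSet h Y ∧ ¬ IsNullSet h (T.1 \ Y) := by
    rintro ⟨T, hTS, hTn⟩
    have := hno T hTS
    rw [IsNullAtom] at this
    push_neg at this
    obtain ⟨Y, hYT, hY1, hY2⟩ := this hTn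
    exact ⟨Y, hYT, hY1, hY2⟩
  set step : {T : Set I // T ⊆ S ∧ ¬ IsNullSet h T} →
      {T : Set I // T ⊆ S ∧ ¬ IsNullSet h T} := fun T =>
    ⟨(split T).choose, (split T).choose_spec.1.trans T.2.1,
      (split T).choose_spec.2.1⟩ with hstep
  set f : ℕ → {T : Set I // T ⊆ S ∧ ¬ IsNullSet h T} :=
    fun n => Nat.rec ⟨S, subset_rfl, hS⟩ (fun _ T => step T) n with hf
  have hfs : ∀ n, f (n + 1) = step (f n) := fun n => rfl
  have hsub : ∀ n, (f (n + 1)).1 ⊆ (f n).1 := by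
    intro n; rw [hfs]; exact (split (f n)).choose_spec.1
  have hdiff : ∀ n, ¬ IsNullSet h ((f n).1 \ (f (n + 1)).1) := by
    intro n; rw [hfs]; exact (split (f n)).choose_spec.2.2
  have hmono : ∀ m n, m ≤ n → (f n).1 ⊆ (f m).1 := by
    intro m n hmn
    induction n with
    | zero => cases Nat.le_zero.mp hmn; exact subset_rfl
    | succ n ih =>
      rcases Nat.lt_or_ge m (n + 1) with h' | h'
      · exact (hsub n).trans (ih (by omega))
      · have : m = n + 1 := by omega
        subst this; exact subset_rfl
  set G : ℕ → Set I := fun n => (f n).1 \ (f (n + 1)).1 with hG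
  have hGd : Pairwise (Disjoint on G) := by
    have key : ∀ m n, m < n → Disjoint (G m) (G n) := by
      intro m n hmn
      rw [Set.disjoint_left]
      intro i hi hi'
      exact hi.2 (hmono (m + 1) n (by omega) hi'.1)
    intro m n hmn
    rcases lt_or_gt_of_ne hmn with h' | h'
    · exact key m n h'
    · exact (key n m h').symm
  obtain ⟨m, hm⟩ := exists_null_of_pairwise_disjoint H G hGd
  exact hdiff m hm

/-- The ultrafilter associated to an atom. -/
noncomputable def atomUltra {S : Set I} (hS : IsNullAtom h S) : Ultrafilter I := by
  refine Ultrafilter.ofComplNotMemIff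
    ⟨{T | IsNullSet h (S \ T)}, ?_, ?_, ?_⟩ ?_
  · show IsNullSet h (S \ Set.univ)
    simpa using (isNullSet_empty : IsNullSet h (∅ : Set I))
  · intro T T' hT hsub
    exact isNullSet_mono (Set.diff_subset_diff_right hsub) hT
  · intro T T' hT hT'
    show IsNullSet h (S \ (T ∩ T'))
    have hsub : S \ (T ∩ T') ⊆ (S \ T) ∪ (S \ T') := by
      intro i hi
      rcases Classical.em (i ∈ T) with h' | h'
      · exact Or.inr ⟨hi.1, fun hc => hi.2 ⟨h', hc⟩⟩
      · exact Or.inl ⟨hi.1, h'⟩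
    exact isNullSet_mono hsub (isNullSet_union hT hT')
  · intro T
    have hST : S \ Tᶜ = S ∩ T := by ext i; simp [Set.mem_diff]
    constructor
    · intro hc
      have hc' : ¬ IsNullSet h (S ∩ T) := by rw [← hST]; exact hc
      rcases hS.2 (S ∩ T) Set.inter_subset_left with h' | h'
      · exact absurd h' hc'
      · show IsNullSet h (S \ T)
        refine isNullSet_mono ?_ h'
        intro i hi
        exact ⟨hi.1, fun hc'' => hi.2 hc''.2⟩
    · intro hT hc
      have hc2 : IsNullSet h (S ∩ T) := by rw [← hST]; exact hc
      have : IsNullSet h S := by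
        have hsub : S ⊆ (S \ T) ∪ (S ∩ T) := by
          intro i hi
          rcases Classical.em (i ∈ T) with h' | h'
          · exact Or.inr ⟨hi, h'⟩
          · exact Or.inl ⟨hi, h'⟩
        exact isNullSet_mono hsub (isNullSet_union hT hc2)
      exact hS.1 this

lemma mem_atomUltra {S : Set I} (hS : IsNullAtom h S) (T : Set I) :
    T ∈ atomUltra hS ↔ IsNullSet h (S \ T) := Iff.rfl

end AuxNull

/-- For a group homomorphism `h` on a product of groups
`A = ∏ᵢ Aᵢ`, the following are equivalent:
(1) for every partition of `I` into countably infinitely many subsets `J m`,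
one of the subgroups `∏_{i ∈ J m} Aᵢ` (the elements supported in `J m`) lies in
`ker h`;
(2) `h` factors through the natural map `A → A/U 0 × … × A/U (n-1)` for some
finitely many ultrafilters `U 0, …, U (n-1)` on `I`. -/
theorem hom_on_product_factors_through_ultraproducts_iff {I : Type u}
    (A : I → Type v) [∀ i, Group (A i)] {C : Type w} [Group C]
    (h : (∀ i, A i) →* C) :
    (∀ J : ℕ → Set I, Pairwise (Disjoint on J) → (⋃ m, J m) = Set.univ →
        ∃ m, ∀ a : ∀ i, A i, (∀ i, i ∉ J m → a i = 1) → h a = 1)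
  ↔ (∃ (n : ℕ) (U : Fin n → Ultrafilter I)
        (g : (∀ m, ReducedProduct (U m : Filter I) A) → C),
        ⇑h = g ∘ fun (a : ∀ i, A i) (m : Fin n) => reducedMk (U m : Filter I) A a) := by
  classical
  constructor
  · -- forward direction
    intro H
    have H' : ∀ J : ℕ → Set I, Pairwise (Disjoint on J) → (⋃ m, J m) = Set.univ →
        ∃ m, IsNullSet h (J m) := H
    by_cases hU : IsNullSet h Set.univ
    · exact ⟨0, Fin.elim0, fun _ => 1,
        funext fun a => hU a fun i hi => absurd (Set.mem_univ i) hi⟩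
    -- Zorn: a maximal pairwise disjoint family of atoms
    set P : Set (Set (Set I)) :=
      {𝒜 | (∀ S ∈ 𝒜, IsNullAtom h S) ∧ 𝒜.Pairwise Disjoint} with hP
    obtain ⟨𝒜, h𝒜max⟩ : ∃ 𝒜, Maximal (· ∈ P) 𝒜 := by
      refine zorn_subset P fun c hcP hc => ⟨⋃₀ c, ⟨?_, ?_⟩, fun s hs => Set.subset_sUnion_of_mem hs⟩
      · rintro S ⟨a, hac, hSa⟩
        exact (hcP hac).1 S hSa
      · rintro S ⟨a, hac, hSa⟩ T ⟨b, hbc, hTb⟩ hST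
        rcases eq_or_ne a b with rfl | hab
        · exact (hcP hac).2 hSa hTb hST
        · rcases hc hac hbc hab with h' | h'
          · exact (hcP hbc).2 (h' hSa) hTb hST
          · exact (hcP hac).2 hSa (h' hTb) hST
    have h𝒜 : 𝒜 ∈ P := h𝒜max.1
    -- 𝒜 is finite
    have hfin : 𝒜.Finite := by
      by_contra hinf
      have hinf' : 𝒜.Infinite := hinf
      set e : ℕ ↪ 𝒜 := hinf'.natEmbedding 𝒜
      have hd : Pairwise (Disjoint on fun m => ((e m : 𝒜) : Set I)) := by
        intro m n hmn
        refine h𝒜.2 (e m).2 (e n).2 ?_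
        intro hc
        exact hmn (e.injective (Subtype.ext hc))
      obtain ⟨m, hm⟩ := exists_null_of_pairwise_disjoint H' _ hd
      exact (h𝒜.1 _ (e m).2).1 hm
    set n : ℕ := hfin.toFinset.card with hn
    set eq : hfin.toFinset ≃ Fin n := hfin.toFinset.equivFin with heq
    set e : Fin n → Set I := fun k => ((eq.symm k : hfin.toFinset) : Set I) with he
    have hemem : ∀ k, e k ∈ 𝒜 := fun k => hfin.mem_toFinset.mp (eq.symm k).2
    have hatom : ∀ k, IsNullAtom h (e k) := fun k => h𝒜.1 _ (hemem k)
    have hsurj : ∀ S ∈ 𝒜, ∃ k, e k = S := by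
      intro S hS
      refine ⟨eq ⟨S, hfin.mem_toFinset.mpr hS⟩, ?_⟩
      rw [he]; simp
    have hdisj : ∀ k k', k ≠ k' → Disjoint (e k) (e k') := by
      intro k k' hkk'
      refine h𝒜.2 (hemem k) (hemem k') ?_
      intro hc
      exact hkk' (eq.symm.injective (Subtype.ext hc))
    -- the complement of the union of atoms is null
    set Z : Set I := (⋃ k, e k)ᶜ with hZ
    have hZnull : IsNullSet h Z := by
      by_contra hZn
      obtain ⟨T, hTZ, hTatom⟩ := exists_atom_subset H' hZn
      have hTnotmem : T ∉ 𝒜 := by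
        intro hT
        obtain ⟨k, hk⟩ := hsurj T hT
        have : T ⊆ (∅ : Set I) := by
          intro i hi
          exact absurd (Set.mem_iUnion.mpr ⟨k, hk ▸ hi⟩) (hTZ hi)
        exact hTatom.1 (isNullSet_mono this isNullSet_empty)
      have hins : insert T 𝒜 ∈ P := by
        constructor
        · rintro S (rfl | hS)
          · exact hTatom
          · exact h𝒜.1 S hS
        · refine Set.pairwise_insert.mpr ⟨h𝒜.2, ?_⟩
          intro S hS _
          have hTS : Disjoint T S := by
            obtain ⟨k, hk⟩ := hsurj S hS
            rw [Set.disjoint_left]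
            intro i hiT hiS
            exact hTZ hiT (Set.mem_iUnion.mpr ⟨k, hk ▸ hiS⟩)
          exact ⟨hTS, hTS.symm⟩
      exact hTnotmem (h𝒜max.2 hins (Set.subset_insert T 𝒜) (Set.mem_insert T 𝒜))
    -- the ultrafilters and the factorization
    set U : Fin n → Ultrafilter I := fun k => atomUltra (hatom k) with hUdef
    set glue : (∀ m : Fin n, ReducedProduct (U m : Filter I) A) → ∀ i, A i :=
      fun x i => if hm : ∃ k, i ∈ e k then Quotient.out (x hm.choose) i else 1 with hglue
    refine ⟨n, U, fun x => h (glue x), funext fun a => ?_⟩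
    show h a = h (glue fun m => reducedMk (U m : Filter I) A a)
    refine h_eq_of_nullSet ?_
    have hnullpart : ∀ k : Fin n, IsNullSet h
        (e k \ {i | Quotient.out (reducedMk (U k : Filter I) A a) i = a i}) := by
      intro k
      have hmem : {i | Quotient.out (reducedMk (U k : Filter I) A a) i = a i}
          ∈ (U k : Filter I) :=
        Quotient.exact (Quotient.out_eq (reducedMk (U k : Filter I) A a))
      exact hmem
    have hcover : {i | a i ≠ glue (fun m => reducedMk (U m : Filter I) A a) i}
        ⊆ Z ∪ ⋃ k, (e k \ {i | Quotient.out (reducedMk (U k : Filter I) A a) i = a i}) := by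
      intro i hi
      by_cases hm : ∃ k, i ∈ e k
      · right
        refine Set.mem_iUnion.mpr ⟨hm.choose, hm.choose_spec, ?_⟩
        intro hc
        apply hi
        rw [hglue]
        simp only [hm, dif_pos]
        exact hc.symm
      · exact Or.inl fun hc => hm (Set.mem_iUnion.mp hc)
    exact isNullSet_mono hcover (isNullSet_union hZnull (isNullSet_iUnion_fin hnullpart))
  · -- reverse direction
    rintro ⟨n, U, g, hg⟩ J hdJ hJu
    set f : Fin n → ℕ := fun k => if hk : ∃ m, J m ∈ U k then hk.choose else 0 with hf
    have key : ∀ m k, J m ∈ U k → m = f k := by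
      intro m k hmk
      have hk : ∃ m', J m' ∈ U k := ⟨m, hmk⟩
      have hck : J hk.choose ∈ U k := hk.choose_spec
      by_contra hne
      have hfk : f k = hk.choose := by rw [hf]; simp [hk]
      have hne' : m ≠ hk.choose := by rw [← hfk]; exact hne
      have hdis : Disjoint (J m) (J hk.choose) := hdJ hne'
      have : J m ∩ J hk.choose ∈ (U k : Filter I) := Filter.inter_mem hmk hck
      rw [Set.disjoint_iff_inter_eq_empty.mp hdis] at this
      exact Filter.empty_notMem (U k : Filter I) this
    obtain ⟨m, hm⟩ := Infinite.exists_notMem_finset (Finset.univ.image f)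
    refine ⟨m, fun a ha => ?_⟩
    have hcompl : ∀ k, (J m)ᶜ ∈ (U k : Filter I) := by
      intro k
      rw [Ultrafilter.mem_coe, Ultrafilter.compl_mem_iff_notMem]
      intro hc
      exact hm (Finset.mem_image.mpr ⟨k, Finset.mem_univ k, (key m k hc).symm⟩)
    have hmk : (fun k : Fin n => reducedMk (U k : Filter I) A a)
        = fun k => reducedMk (U k : Filter I) A 1 := by
      funext k
      refine Quotient.sound ?_
      show {i | a i = (1 : ∀ i, A i) i} ∈ (U k : Filter I)
      refine Filter.mem_of_superset (hcompl k) fun i hi => ?_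
      show a i = 1
      exact ha i hi
    have h1 : h a = g (fun k => reducedMk (U k : Filter I) A a) := congrFun hg a
    have h2 : h 1 = g (fun k => reducedMk (U k : Filter I) A 1) := congrFun hg 1
    rw [h1, hmk, ← h2, map_one]
end

section
/- Let D be an infinite division ring, I a set, and F a filter on I which is not the intersection of finitely many card(D)^+-complete ultrafilters on I. Then dim_D(D^I/F) = card(D^I/F), where dim_D can be taken to mean the dimension either as a right or as a left D-vector space. -/
/-!
It suffices to show that the dimension is at least `#D`: a vector space over an infinite
division ring whose dimension is at least the size of the ring has as many elements as its
dimension.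

If some ultrafilter `U` refining `F` is not `#D⁺`-complete, let `μ ≤ #D` be its completeness
number. A family of `μ` members of `U` whose intersection is not in `U` gives `r : I → μ`
pushing `U` forward to a filter `W` containing every `Ioi β`, and `D^μ/W` embeds into
`D^I/F`. When `μ < #D` the members of `W` are infinite and the Erdős–Kaplansky argument for
`D^ℕ` goes through; when `μ = #D` a diagonal argument does.

Otherwise every ultrafilter refining `F` is `#D⁺`-complete, hence countably complete, and
there are infinitely many of them. Countably many of them are separated by pairwise disjoint
members, which gives `r : I → ℕ` with `r_* F = ⊤`, so that `D^ℕ` embeds into `D^I/F`.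

The right vector space `D^I/F` is the left one for `Dᵐᵒᵖ`.
-/

universe u

/-- The left `D`-subspace of `D^I` of elements vanishing on a member of the
filter `F`; the quotient by it is the reduced power `D^I/F` as a left
`D`-vector space. -/
def zeroSetSubmodule (D : Type u) [DivisionRing D] {I : Type u} (F : Filter I) :
    Submodule D (I → D) where
  carrier := {f | {i | f i = 0} ∈ F}
  zero_mem' := by simpa using Filter.univ_mem
  add_mem' := by
    intro f g hf hg
    refine Filter.mem_of_superset (Filter.inter_mem hf hg) (fun i hi => ?_)
    have h1 : f i = 0 := hi.1
    have h2 : g i = 0 := hi.2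
    show (f + g) i = 0
    simp [h1, h2]
  smul_mem' := by
    intro c f hf
    refine Filter.mem_of_superset hf (fun i hi => ?_)
    have h1 : f i = 0 := hi
    show (c • f) i = 0
    simp [h1]

/-- The right `D`-subspace (i.e. `Dᵐᵒᵖ`-submodule) of `D^I` of elements
vanishing on a member of the filter `F`; the quotient by it is the reduced
power `D^I/F` as a right `D`-vector space. -/
def zeroSetSubmoduleRight (D : Type u) [DivisionRing D] {I : Type u}
    (F : Filter I) : Submodule Dᵐᵒᵖ (I → D) where
  carrier := {f | {i | f i = 0} ∈ F}
  zero_mem' := by simpa using Filter.univ_mem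
  add_mem' := by
    intro f g hf hg
    refine Filter.mem_of_superset (Filter.inter_mem hf hg) (fun i hi => ?_)
    have h1 : f i = 0 := hi.1
    have h2 : g i = 0 := hi.2
    show (f + g) i = 0
    simp [h1, h2]
  smul_mem' := by
    intro c f hf
    refine Filter.mem_of_superset hf (fun i hi => ?_)
    have h1 : f i = 0 := hi
    show (c • f) i = 0
    simp [h1]

open Cardinal Set

theorem Cardinal.mk_finsupp_le_max (α β : Type u) [Zero β] :
    #(α →₀ β) ≤ max (max #α #β) ℵ₀ := by
  cases fintypeOrInfinite α with
  | inl _ =>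
    rw [mk_finsupp_of_fintype]
    rcases le_or_gt ℵ₀ #β with hβ | hβ
    · exact le_max_of_le_left <| le_max_of_le_right <| power_nat_le hβ
    · exact le_max_of_le_right (power_lt_aleph0 hβ natCast_lt_aleph0).le
  | inr _ =>
    rcases subsingleton_or_nontrivial β with _ | _
    · exact le_max_of_le_right (mk_le_aleph0 (α := α →₀ β))
    · exact (mk_finsupp_of_infinite α β).trans_le (le_max_left _ _)

section Rank

variable (K V : Type u) [DivisionRing K] [AddCommGroup V] [Module K V]

theorem mk_le_max_rank : #V ≤ max (max (Module.rank K V) #K) ℵ₀ := by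
  obtain ⟨⟨ι, b⟩⟩ := Module.Free.exists_basis (R := K) (M := V)
  rw [b.repr.toEquiv.cardinal_eq, ← b.mk_eq_rank'']
  exact mk_finsupp_le_max ι K

theorem mk_le_rank_of_max_lt (h : max #K ℵ₀ < #V) : #V ≤ Module.rank K V := by
  have := mk_le_max_rank K V
  rw [max_assoc] at this
  exact (le_max_iff.mp this).resolve_right h.not_ge

theorem rank_eq_mk_of_mk_le_rank [Infinite K] (h : #K ≤ Module.rank K V) :
    Module.rank K V = #V := by
  refine le_antisymm (rank_le_card K V) ((mk_le_max_rank K V).trans ?_)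
  exact max_le (max_le le_rfl h) ((aleph0_le_mk K).trans h)

theorem Submodule.exists_linearCombination_sub_mem (Z : Submodule K V) :
    ∃ (A : Type u) (v : A → V), #A = Module.rank K (V ⧸ Z) ∧
      ∀ f : V, ∃ c : A →₀ K, f - Finsupp.linearCombination K v c ∈ Z := by
  obtain ⟨⟨A, b⟩⟩ := Module.Free.exists_basis (R := K) (M := V ⧸ Z)
  choose v hv using fun a => Z.mkQ_surjective (b a)
  refine ⟨A, v, b.mk_eq_rank'', fun f => ⟨b.repr (Z.mkQ f), ?_⟩⟩
  rw [← Submodule.Quotient.mk_eq_zero, Submodule.Quotient.mk_sub, sub_eq_zero]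
  change Z.mkQ f = Z.mkQ _
  rw [Finsupp.apply_linearCombination, show Z.mkQ ∘ v = b from funext hv,
    b.linearCombination_repr]

end Rank

section ReducedPower

variable {D : Type u} [DivisionRing D] {I J : Type u}

theorem mem_zeroSetSubmodule {F : Filter I} {f : I → D} :
    f ∈ zeroSetSubmodule D F ↔ {i | f i = 0} ∈ F := Iff.rfl

theorem zeroSetSubmodule_top : zeroSetSubmodule D (⊤ : Filter I) = ⊥ := by
  ext f
  simp [mem_zeroSetSubmodule, Filter.mem_top, eq_univ_iff_forall, funext_iff]

theorem rank_quot_zeroSetSubmodule_mono {F G : Filter I} (h : G ≤ F) :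
    Module.rank D ((I → D) ⧸ zeroSetSubmodule D G)
      ≤ Module.rank D ((I → D) ⧸ zeroSetSubmodule D F) :=
  LinearMap.rank_le_of_surjective _ (Submodule.factor_surjective fun _ hf => h hf)

theorem rank_quot_zeroSetSubmodule_map_le (F : Filter I) (r : I → J) :
    Module.rank D ((J → D) ⧸ zeroSetSubmodule D (F.map r))
      ≤ Module.rank D ((I → D) ⧸ zeroSetSubmodule D F) := by
  set Φ := (zeroSetSubmodule D F).mkQ ∘ₗ LinearMap.funLeft D D r
  have hker : LinearMap.ker Φ = zeroSetSubmodule D (F.map r) := by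
    ext g
    simp only [Φ, LinearMap.mem_ker, LinearMap.coe_comp, Function.comp_apply,
      Submodule.mkQ_apply, Submodule.Quotient.mk_eq_zero]
    rfl
  exact LinearMap.rank_le_of_injective ((zeroSetSubmodule D (F.map r)).liftQ Φ hker.ge) <|
    LinearMap.ker_eq_bot.mp <| Submodule.ker_liftQ_eq_bot _ _ _ hker.le

theorem card_le_rank_quot_zeroSetSubmodule_top [Infinite J] :
    #D ≤ Module.rank D ((J → D) ⧸ zeroSetSubmodule D (⊤ : Filter J)) := by
  rw [(Submodule.quotEquivOfEqBot _ zeroSetSubmodule_top).rank_eq, rank_fun_infinite]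
  exact mk_le_of_injective (Function.const_injective (α := J))

end ReducedPower

section LowerBounds

variable {D : Type u} [DivisionRing D] {B : Type u}

/-- The argument of `max_aleph0_card_le_rank_fun_nat`: if the quotient had rank `< #D`, the
entries of lifts of a basis would generate a division subring `L` with `#L < #D`. Over `L`
the space `D` has dimension `> #B`, yet every `w : B → D` takes its values on some member of
`W` in a finite-dimensional `L`-subspace. -/
theorem card_le_rank_quot_zeroSetSubmodule_of_infinite (W : Filter B)
    (hW : ∀ s ∈ W, s.Infinite) (hD : ℵ₀ < #D) (hBD : #B < #D) :
    #D ≤ Module.rank D ((B → D) ⧸ zeroSetSubmodule D W) := by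
  by_contra! hrank
  obtain ⟨A, v, hA, hv⟩ := (zeroSetSubmodule D W).exists_linearCombination_sub_mem
  let L : Subfield Dᵐᵒᵖ :=
    Subfield.closure (range fun p : A × B => MulOpposite.op (v p.1 p.2))
  have hL : #L < #D := by
    refine (Subfield.cardinalMk_closure_le_max _).trans_lt (max_lt (mk_range_le.trans_lt ?_) hD)
    rw [mk_prod, lift_id, lift_id]
    exact (mul_le_max _ _).trans_lt (max_lt (max_lt (hA.trans_lt hrank) hBD) hD)
  obtain ⟨⟨ι, b⟩⟩ := Module.Free.exists_basis (R := L) (M := D)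
  obtain ⟨e⟩ : Nonempty (B ↪ ι) := by
    rw [← Cardinal.le_def, b.mk_eq_rank'']
    exact hBD.le.trans (mk_le_rank_of_max_lt L D (max_lt hL hD))
  obtain ⟨c, hc⟩ := hv (b ∘ e)
  set S := {x | (b ∘ e - Finsupp.linearCombination D v c) x = 0}
  have hS : ∀ x ∈ S, b (e x) ∈ Submodule.span L (range fun a : c.support => c a) := by
    intro x hx
    have hx' : b (e x) = Finsupp.linearCombination D v c x := sub_eq_zero.mp hx
    rw [hx', Finsupp.linearCombination_apply, Finsupp.sum, Finset.sum_apply]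
    refine Submodule.sum_mem _ fun a ha => ?_
    have hmem : MulOpposite.op (v a x) ∈ L := Subfield.subset_closure ⟨(a, x), rfl⟩
    exact Submodule.smul_mem _ (⟨_, hmem⟩ : L) (Submodule.subset_span ⟨⟨a, ha⟩, rfl⟩)
  have : Finite S :=
    ((b.linearIndependent.comp e e.injective).comp _ Subtype.val_injective).finite_of_le_span_finite
      _ _ (range_subset_iff.mpr fun x => hS x x.2)
  exact hW S hc (Set.toFinite S)

/-- Diagonalisation: if the quotient had rank `< #D`, the linear combinations of lifts of a
basis could be enumerated as `g ξ`, `ξ : B`. Choosing `u b` outside `{g ξ b | ξ ≤ b}`, `u`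
differs from each `g ξ` on `Ioi ξ ∈ W`. -/
theorem card_le_rank_quot_zeroSetSubmodule_of_Ioi_mem [LinearOrder B] [Infinite D]
    (W : Filter B) [W.NeBot] (hW : ∀ b, Ioi b ∈ W) (hIic : ∀ b : B, #(Iic b) < #D)
    (hBD : #D ≤ #B) :
    #D ≤ Module.rank D ((B → D) ⧸ zeroSetSubmodule D W) := by
  by_contra! hrank
  obtain ⟨A, v, hA, hv⟩ := (zeroSetSubmodule D W).exists_linearCombination_sub_mem
  have hcard : #(A →₀ D) ≤ #B := (mk_finsupp_le_max A D).trans <|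
    (max_le (max_le (hA.trans_lt hrank).le le_rfl) (aleph0_le_mk D)).trans hBD
  obtain ⟨e⟩ := (Cardinal.le_def _ _).mp hcard
  set g : B → B → D := fun ξ => Finsupp.linearCombination D v (Function.invFun e ξ)
  have hdiag : ∀ b, ∃ d : D, d ∉ (fun ξ => g ξ b) '' Iic b := by
    intro b
    by_contra! h
    exact (mk_image_le.trans_lt (hIic b)).not_ge
      ((mk_univ (α := D)).symm.le.trans (mk_le_mk_of_subset fun d _ => h d))
  choose u hu using hdiag
  obtain ⟨c, hc⟩ := hv u
  obtain ⟨ξ, rfl⟩ := Function.invFun_surjective e.injective c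
  obtain ⟨b, hb, hξb⟩ := Filter.nonempty_of_mem (Filter.inter_mem hc (hW ξ))
  exact hu b ⟨ξ, le_of_lt hξb, (sub_eq_zero.mp hb).symm⟩

end LowerBounds

section Completeness

variable {I : Type u}

theorem KappaComplete.iInter_mem {κ : Cardinal.{u}} {F : Filter I} (hF : KappaComplete κ F)
    {ι : Type u} (hι : #ι < κ) {s : ι → Set I} (hs : ∀ i, s i ∈ F) : ⋂ i, s i ∈ F := by
  rw [← sInter_range]
  exact hF _ (mk_range_le.trans_lt hι) (forall_mem_range.mpr hs)

theorem KappaComplete.countableInterFilter {κ : Cardinal.{u}} {F : Filter I}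
    (hF : KappaComplete κ F) (hκ : ℵ₀ < κ) : CountableInterFilter F :=
  ⟨fun _ hS => hF _ (hS.le_aleph0.trans_lt hκ)⟩

theorem exists_kappaComplete_of_not_kappaComplete {κ : Cardinal.{u}} {F : Filter I}
    (hF : ¬ KappaComplete κ F) :
    ∃ μ : Cardinal.{u}, ℵ₀ ≤ μ ∧ μ < κ ∧ KappaComplete μ F ∧
      ∃ s : μ.ord.ToType → Set I, (∀ β, s β ∈ F) ∧ ⋂ β, s β ∉ F := by
  let P : Set Cardinal.{u} := {c | ∃ 𝒮 : Set (Set I), #𝒮 = c ∧ (∀ s ∈ 𝒮, s ∈ F) ∧ ⋂₀ 𝒮 ∉ F}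
  simp only [KappaComplete, not_forall, exists_prop] at hF
  obtain ⟨𝒮₀, h𝒮₀κ, h𝒮₀F, h𝒮₀⟩ := hF
  have hP : P.Nonempty := ⟨_, 𝒮₀, rfl, h𝒮₀F, h𝒮₀⟩
  obtain ⟨𝒮, h𝒮μ, h𝒮F, h𝒮⟩ := csInf_mem hP
  have hμ : KappaComplete (sInf P) F := fun 𝒯 h𝒯 h𝒯F => by
    by_contra h
    exact h𝒯.not_ge (csInf_le' (show #𝒯 ∈ P from ⟨𝒯, rfl, h𝒯F, h⟩))
  refine ⟨sInf P, ?_, (csInf_le' (show #𝒮₀ ∈ P from ⟨𝒮₀, rfl, h𝒮₀F, h𝒮₀⟩)).trans_lt h𝒮₀κ, hμ, ?_⟩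
  · by_contra! hfin
    exact h𝒮 ((Filter.sInter_mem (lt_aleph0_iff_set_finite.mp (h𝒮μ.trans_lt hfin))).mpr h𝒮F)
  · obtain ⟨e⟩ := Cardinal.eq.mp (h𝒮μ.trans (mk_ord_toType _).symm)
    refine ⟨fun β => e.symm β, fun β => h𝒮F _ (e.symm β).2, ?_⟩
    show ⋂ β, (e.symm β : Set I) ∉ F
    rwa [e.symm.surjective.iInter_comp (fun s : 𝒮 => (s : Set I)), ← sInter_eq_iInter]

theorem mk_Iic_ord_toType_lt {μ : Cardinal.{u}} (hμ : ℵ₀ ≤ μ) (β : μ.ord.ToType) :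
    #(Iic β) < μ := by
  rw [← Iio_insert]
  refine mk_insert_le.trans_lt (add_lt_of_lt hμ ?_ (one_lt_aleph0.trans_le hμ))
  simpa using mk_Iio_lt β

/-- Send `i` to the least `γ` with `i ∉ s γ`: if `i` lies in `s γ` for all `γ ≤ β` but not
in all `s γ`, this is above `β`. -/
theorem exists_forall_Ioi_mem_map {J : Type u} [LinearOrder J] [WellFoundedLT J] [Nonempty J]
    (F : Filter I) (s : J → Set I) (hs : ∀ β, ⋂ γ ∈ Iic β, s γ ∈ F) (hcompl : (⋂ γ, s γ)ᶜ ∈ F) :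
    ∃ r : I → J, ∀ β, Ioi β ∈ F.map r := by
  classical
  let r : I → J := fun i =>
    if h : ∃ γ, i ∉ s γ then wellFounded_lt.min {γ | i ∉ s γ} h else Classical.arbitrary J
  refine ⟨r, fun β => Filter.mem_map.mpr <|
    Filter.mem_of_superset (Filter.inter_mem (hs β) hcompl) ?_⟩
  rintro i ⟨hiβ, hi⟩
  have h : ∃ γ, i ∉ s γ := by simpa using hi
  simp only [mem_preimage, mem_Ioi, r, dif_pos h]
  by_contra! hle
  exact wellFounded_lt.min_mem {γ | i ∉ s γ} h (mem_iInter₂.mp hiβ _ hle)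

theorem Ultrafilter.exists_forall_Ioi_mem_map_of_not_kappaComplete {κ : Cardinal.{u}}
    (U : Ultrafilter I) (hU : ¬ KappaComplete κ (U : Filter I)) :
    ∃ μ : Cardinal.{u}, ℵ₀ ≤ μ ∧ μ < κ ∧
      ∃ r : I → μ.ord.ToType, ∀ β, Ioi β ∈ (U : Filter I).map r := by
  obtain ⟨μ, hμ, hμκ, hUμ, s, hsU, hs⟩ := exists_kappaComplete_of_not_kappaComplete hU
  have : Nonempty μ.ord.ToType := by
    rw [← mk_ne_zero_iff, mk_ord_toType]
    exact (aleph0_pos.trans_le hμ).ne'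
  refine ⟨μ, hμ, hμκ, exists_forall_Ioi_mem_map _ s (fun β => ?_) (U.compl_mem_iff_notMem.mpr hs)⟩
  rw [biInter_eq_iInter]
  exact hUμ.iInter_mem (mk_Iic_ord_toType_lt hμ β) fun γ => hsU γ

end Completeness

section Separation

variable {I J : Type u}

theorem Filter.exists_fin_eq_iSup_ultrafilter_of_finite (F : Filter I)
    (h : {U : Ultrafilter I | ↑U ≤ F}.Finite) :
    ∃ (n : ℕ) (U : Fin n → Ultrafilter I), (∀ m, ↑(U m) ≤ F) ∧ F = ⨆ m, (U m : Filter I) := by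
  have := h.fintype
  let e := (Fintype.equivFin {U : Ultrafilter I | ↑U ≤ F}).symm
  refine ⟨_, fun m => e m, fun m => (e m).2, ?_⟩
  conv_lhs => rw [← Filter.iSup_ultrafilter_le_eq F, iSup_subtype']
  exact (e.iSup_comp (g := fun U : {U : Ultrafilter I | ↑U ≤ F} => (U : Filter I))).symm

/-- Distinct countably complete ultrafilters `U j` are separated by pairwise disjoint
members `A j`, obtained by intersecting, over `k ≠ j`, a member of `U j` that is not in
`U k` with the complement of a member of `U k` that is not in `U j`. -/
theorem Ultrafilter.exists_preimage_singleton_mem [Countable J] [Nonempty J]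
    (U : J → Ultrafilter I) (hU : Function.Injective U)
    [∀ j, CountableInterFilter (U j : Filter I)] :
    ∃ r : I → J, ∀ j, r ⁻¹' {j} ∈ U j := by
  classical
  have hsep : ∀ j k, ∃ t : Set I, j ≠ k → t ∈ U j ∧ t ∉ U k := by
    intro j k
    by_cases hjk : j = k
    · exact ⟨univ, fun h => (h hjk).elim⟩
    · by_contra! h
      exact hjk (hU (Ultrafilter.eq_of_le fun t ht => (h t).2 ht)).symm
  choose t ht using hsep
  let A : J → Set I := fun j => ⋂ k, ⋂ (_ : k ≠ j), t j k ∩ (t k j)ᶜ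
  have hA : ∀ j, A j ∈ U j := fun j => countable_iInter_mem.mpr fun k =>
    countable_iInter_mem.mpr fun hkj => Filter.inter_mem (ht j k hkj.symm).1
      (Ultrafilter.compl_mem_iff_notMem.mpr (ht k j hkj).2)
  have hdisj : ∀ {i j k}, i ∈ A j → i ∈ A k → j = k := by
    intro i j k hj hk
    by_contra hjk
    exact (mem_iInter₂.mp hk j hjk).2 (mem_iInter₂.mp hj k (Ne.symm hjk)).1
  refine ⟨fun i => if h : ∃ j, i ∈ A j then h.choose else Classical.arbitrary J,
    fun j => Filter.mem_of_superset (hA j) fun i hi => ?_⟩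
  have h : ∃ j, i ∈ A j := ⟨j, hi⟩
  simp only [mem_preimage, mem_singleton_iff, dif_pos h]
  exact hdisj h.choose_spec hi

end Separation

section Main

variable {D : Type u} [DivisionRing D] [Infinite D] {I : Type u}

theorem card_le_rank_quot_zeroSetSubmodule_of_not_kappaComplete (U : Ultrafilter I)
    (hU : ¬ KappaComplete (Order.succ #D) (U : Filter I)) :
    #D ≤ Module.rank D ((I → D) ⧸ zeroSetSubmodule D (U : Filter I)) := by
  obtain ⟨μ, hμ, hμD, r, hr⟩ := U.exists_forall_Ioi_mem_map_of_not_kappaComplete hU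
  refine le_trans ?_ (rank_quot_zeroSetSubmodule_map_le _ r)
  rcases (Order.lt_succ_iff.mp hμD).lt_or_eq with hlt | rfl
  · refine card_le_rank_quot_zeroSetSubmodule_of_infinite _ (fun s hs hfin => ?_)
      (hμ.trans_lt hlt) ((mk_ord_toType μ).trans_lt hlt)
    have : Nonempty μ.ord.ToType := (Filter.nonempty_of_mem hs).to_subtype.map (↑)
    obtain ⟨m, hm⟩ := hfin.bddAbove
    obtain ⟨x, hxs, hmx⟩ := Filter.nonempty_of_mem (Filter.inter_mem hs (hr m))
    exact (hm hxs).not_gt hmx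
  · exact card_le_rank_quot_zeroSetSubmodule_of_Ioi_mem _ hr (mk_Iic_ord_toType_lt hμ)
      (mk_ord_toType _).ge

theorem card_le_rank_quot_zeroSetSubmodule_of_forall_kappaComplete (F : Filter I)
    (hall : ∀ U : Ultrafilter I, ↑U ≤ F → KappaComplete (Order.succ #D) (U : Filter I))
    (hF : ¬ ∃ (n : ℕ) (U : Fin n → Ultrafilter I),
      (∀ m, KappaComplete (Order.succ #D) (U m : Filter I)) ∧ F = ⨆ m, (U m : Filter I)) :
    #D ≤ Module.rank D ((I → D) ⧸ zeroSetSubmodule D F) := by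
  have hX : {U : Ultrafilter I | ↑U ≤ F}.Infinite := fun hfin => hF <| by
    obtain ⟨n, U, hUF, hFU⟩ := F.exists_fin_eq_iSup_ultrafilter_of_finite hfin
    exact ⟨n, U, fun m => hall _ (hUF m), hFU⟩
  let U : ULift.{u} ℕ → Ultrafilter I := fun n => hX.natEmbedding _ n.down
  have hUF : ∀ n, ↑(U n) ≤ F := fun n => (hX.natEmbedding _ n.down).2
  have hU : ∀ n, CountableInterFilter (U n : Filter I) := fun n =>
    (hall _ (hUF n)).countableInterFilter ((aleph0_le_mk D).trans_lt (Order.lt_succ _))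
  obtain ⟨r, hr⟩ := Ultrafilter.exists_preimage_singleton_mem U
    fun m n h => ULift.ext _ _ ((hX.natEmbedding _).injective (Subtype.ext h))
  -- every member of `F.map r` contains each `n`, since `r ⁻¹' {n} ∈ U n` and `U n ≤ F`
  have htop : F.map r = ⊤ := by
    refine top_unique fun s hs => Filter.mem_top.mpr (eq_univ_of_forall fun n => ?_)
    obtain ⟨i, his, hin⟩ := Filter.nonempty_of_mem (Filter.inter_mem (hUF n hs) (hr n))
    exact hin ▸ his
  calc #D ≤ Module.rank D ((ULift ℕ → D) ⧸ zeroSetSubmodule D (⊤ : Filter (ULift ℕ))) :=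
        card_le_rank_quot_zeroSetSubmodule_top
    _ ≤ Module.rank D ((I → D) ⧸ zeroSetSubmodule D F) :=
        htop ▸ rank_quot_zeroSetSubmodule_map_le F r

theorem rank_quot_zeroSetSubmodule_eq_card (F : Filter I)
    (hF : ¬ ∃ (n : ℕ) (U : Fin n → Ultrafilter I),
      (∀ m, KappaComplete (Order.succ #D) (U m : Filter I)) ∧ F = ⨆ m, (U m : Filter I)) :
    Module.rank D ((I → D) ⧸ zeroSetSubmodule D F) = #((I → D) ⧸ zeroSetSubmodule D F) := by
  refine rank_eq_mk_of_mk_le_rank D _ ?_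
  by_cases h : ∃ U : Ultrafilter I, ↑U ≤ F ∧ ¬ KappaComplete (Order.succ #D) (U : Filter I)
  · obtain ⟨U, hUF, hU⟩ := h
    exact (card_le_rank_quot_zeroSetSubmodule_of_not_kappaComplete U hU).trans
      (rank_quot_zeroSetSubmodule_mono hUF)
  · push Not at h
    exact card_le_rank_quot_zeroSetSubmodule_of_forall_kappaComplete F h hF

end Main

/-- `op : D → Dᵐᵒᵖ` turns right multiplication on `D` into left multiplication on `Dᵐᵒᵖ`. -/
noncomputable def quotZeroSetSubmoduleRightEquiv (D : Type u) [DivisionRing D] {I : Type u}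
    (F : Filter I) :
    ((I → D) ⧸ zeroSetSubmoduleRight D F) ≃ₗ[Dᵐᵒᵖ] ((I → Dᵐᵒᵖ) ⧸ zeroSetSubmodule Dᵐᵒᵖ F) :=
  Submodule.Quotient.equiv _ _
    (LinearEquiv.piCongrRight fun _ => MulOpposite.opLinearEquiv Dᵐᵒᵖ) <| by
      ext f
      simp [Submodule.map_equiv_eq_comap_symm, mem_zeroSetSubmodule, zeroSetSubmoduleRight]

/-- extended Erdős–Kaplansky: Let `D` be an infinite division
ring, `I` a set, and `F` a filter on `I` which is not the intersection of
finitely many `card(D)⁺`-complete ultrafilters on `I`.  Then the dimension of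
the reduced power `D^I/F`, both as a left and as a right `D`-vector space,
equals its cardinality. -/
theorem rank_reduced_power_eq_card (D : Type u) [DivisionRing D] [Infinite D]
    {I : Type u} (F : Filter I)
    (hF : ¬ ∃ (n : ℕ) (U : Fin n → Ultrafilter I),
      (∀ m, KappaComplete (Order.succ (Cardinal.mk D)) (U m : Filter I)) ∧
      F = ⨆ m, (U m : Filter I)) :
    Module.rank D ((I → D) ⧸ zeroSetSubmodule D F)
        = Cardinal.mk ((I → D) ⧸ zeroSetSubmodule D F) ∧
    Module.rank Dᵐᵒᵖ ((I → D) ⧸ zeroSetSubmoduleRight D F)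
        = Cardinal.mk ((I → D) ⧸ zeroSetSubmoduleRight D F) := by
  refine ⟨rank_quot_zeroSetSubmodule_eq_card F hF, ?_⟩
  have : Infinite Dᵐᵒᵖ := infinite_iff.mpr (mk_mulOpposite.symm ▸ aleph0_le_mk D)
  let e := quotZeroSetSubmoduleRightEquiv D F
  rw [e.rank_eq, e.toEquiv.cardinal_eq]
  exact rank_quot_zeroSetSubmodule_eq_card F (mk_mulOpposite (α := D) ▸ hF)
end

section
/- Let D be an infinite division ring and let κ = card(D). Then there exists a κ × κ array (x_{αβ})_{α,β<κ} of elements of D such that for every natural number n and every pair of strictly increasing n-tuples (α_0, …, α_{n-1}) and (β_0, …, β_{n-1}) of ordinals below κ, the n × n matrix (x_{α_i β_j})_{0≤i,j<n} is nonsingular; equivalently, the n column vectors (x_{α_i β_j})_{i=0,…,n-1} ∈ D^n (j = 0, …, n-1) are left linearly independent over D. -/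
/-!
Enumerate the positions `(α, β)` of the array in order type `κ` (a bijection `κ ≃ κ × κ`) and
choose the entries one at a time by transfinite recursion. When the entry at time `σ` is chosen,
consider every square subarray whose entries all have time `≤ σ` and one of them time `σ`, and
whose complementary minor of that entry is nonsingular. Changing a single entry of a matrix whose
complementary minor is nonsingular can make it singular for at most one value, and there are
fewer than `κ` such subarrays, since they are determined by finite sets of positions of time
`≤ σ`. So some value in `D` avoids all of them, and induction on the size of a subarray, deleting
the row and column of its latest entry, shows that every square subarray is nonsingular.
-/

open Cardinal Set Function Submodule

universe u

section LinearAlgebra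

theorem eq_of_mem_span_of_map_eq {R M M' ι : Type*} [Ring R] [AddCommGroup M] [Module R M]
    [AddCommGroup M'] [Module R M'] {f : M →ₗ[R] M'} {v : ι → M}
    (hv : LinearIndependent R (f ∘ v)) {x y : M} (hx : x ∈ span R (range v))
    (hy : y ∈ span R (range v)) (hxy : f x = f y) : x = y :=
  sub_eq_zero.mp <| disjoint_def.mp (range_ker_disjoint hv) _ (sub_mem hx hy) (by simp [hxy])

variable {K V : Type*} [DivisionRing K] [AddCommGroup V] [Module K V]

theorem linearIndependent_iff_succAbove {n : ℕ} (p : Fin (n + 1)) {v : Fin (n + 1) → V} :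
    LinearIndependent K v ↔
      LinearIndependent K (v ∘ p.succAbove) ∧ v p ∉ span K (range (v ∘ p.succAbove)) := by
  rw [← linearIndependent_equiv (finSuccEquiv' p).symm, linearIndependent_option]
  rfl

theorem linearIndependent_or_linearIndependent_of_minor {n : ℕ}
    {v w : Fin (n + 1) → Fin (n + 1) → K} {j₀ i₀ : Fin (n + 1)}
    (hminor : LinearIndependent K fun j i => v (j₀.succAbove j) (i₀.succAbove i))
    (hvw : ∀ j i, (j, i) ≠ (j₀, i₀) → v j i = w j i) (hne : v j₀ i₀ ≠ w j₀ i₀) :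
    LinearIndependent K v ∨ LinearIndependent K w := by
  let f := LinearMap.funLeft K K i₀.succAbove
  have hcols : v ∘ j₀.succAbove = w ∘ j₀.succAbove :=
    funext fun j => funext fun i => hvw _ _ (by simp [Fin.succAbove_ne])
  have hrestrict : LinearIndependent K (f ∘ v ∘ j₀.succAbove) := hminor
  have hmap : f (v j₀) = f (w j₀) :=
    funext fun i => hvw _ _ (by simp [Fin.succAbove_ne])
  rw [linearIndependent_iff_succAbove j₀, linearIndependent_iff_succAbove j₀, ← hcols]
  by_contra! h
  exact hne <| congrFun (eq_of_mem_span_of_map_eq hrestrict (h.1 hrestrict.of_comp)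
    (h.2 hrestrict.of_comp) hmap) i₀

end LinearAlgebra

section Cardinal

theorem Cardinal.mk_setOf_finset_subset_lt {α : Type u} {s : Set α} {c : Cardinal.{u}}
    (hc : ℵ₀ ≤ c) (hs : #s < c) : #{F : Finset α | ↑F ⊆ s} < c := by
  classical
  have hsub : {F : Finset α | ↑F ⊆ s} ⊆ range (Finset.map (Embedding.subtype (· ∈ s))) :=
    fun F hF => ⟨F.subtype (· ∈ s), Finset.subtype_map_of_mem hF⟩
  refine (mk_le_mk_of_subset hsub).trans_lt (mk_range_le.trans_lt ?_)
  rcases finite_or_infinite s with hfin | hinf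
  · exact (lt_aleph0_of_finite _).trans_le hc
  · rwa [mk_finset_of_infinite]

theorem Cardinal.mk_iUnion_le_of_subsingleton {α ι : Type u} {f : ι → Set α}
    (hf : ∀ i, (f i).Subsingleton) : #(⋃ i, f i) ≤ #ι :=
  calc #(⋃ i, f i) ≤ #ι * ⨆ i, #(f i) := mk_iUnion_le f
    _ ≤ #ι * 1 := by
      gcongr
      exact ciSup_le' fun i => mk_le_one_iff_set_subsingleton.mpr (hf i)
    _ = #ι := mul_one _

end Cardinal

theorem WellFoundedLT.exists_forall_restrict {T α : Type*} [LT T] [DecidableLT T]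
    [WellFoundedLT T] (a₀ : α) (P : T → (T → α) → α → Prop) (hP : ∀ σ h, ∃ a, P σ h a) :
    ∃ g : T → α, ∀ σ, P σ (fun τ => if τ < σ then g τ else a₀) (g σ) := by
  choose pick hpick using hP
  refine ⟨WellFoundedLT.fix fun σ ih => pick σ fun τ => if hτ : τ < σ then ih τ hτ else a₀,
    fun σ => ?_⟩
  rw [WellFoundedLT.fix_eq]
  simpa only [dite_eq_ite] using hpick σ _

def StronglyLinearIndependent (R : Type*) {ι κ : Type*} [Semiring R] [LinearOrder ι]
    [LinearOrder κ] (x : ι → κ → R) : Prop :=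
  ∀ (n : ℕ) (a : Fin n → ι) (b : Fin n → κ), StrictMono a → StrictMono b →
    LinearIndependent R fun j i => x (a i) (b j)

section Construction

variable {D : Type u} [DivisionRing D] {ι κ T : Type u} [LinearOrder ι] [LinearOrder κ]
  [LinearOrder T] (t : ι × κ → T)

/- A function `h : T → D` stands for the array `fun i j => h (t (i, j))`, whose entries are
indexed by the time `t (i, j)` at which they are chosen. -/
def badValuesOn (σ : T) (h : T → D) (P : Set (ι × κ)) : Set D :=
  {d | ∃ (n : ℕ) (a : Fin (n + 1) → ι) (b : Fin (n + 1) → κ) (i₀ j₀ : Fin (n + 1)),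
    StrictMono a ∧ StrictMono b ∧ range a ×ˢ range b = P ∧ t (a i₀, b j₀) = σ ∧
    (LinearIndependent D fun j i => update h σ d (t (a (i₀.succAbove i), b (j₀.succAbove j)))) ∧
    ¬ LinearIndependent D fun j i => update h σ d (t (a i, b j))}

def badValues (σ : T) (h : T → D) : Set D :=
  ⋃ F : {F : Finset (ι × κ) | ↑F ⊆ t ⁻¹' Iic σ}, badValuesOn t σ h F

variable {t}

theorem badValuesOn_subsingleton (ht : Injective t) (σ : T) (h : T → D) (P : Set (ι × κ)) :
    (badValuesOn t σ h P).Subsingleton := by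
  rintro d ⟨n, a, b, i₀, j₀, ha, hb, hP, hσ, hminor, hsing⟩
    d' ⟨n', a', b', i₀', j₀', ha', hb', hP', hσ', -, hsing'⟩
  obtain ⟨hra, hrb⟩ := (prod_eq_prod_iff_of_nonempty ⟨(a 0, b 0), by simp⟩).mp (hP.trans hP'.symm)
  obtain rfl : n = n' := by
    simpa [ncard_range_of_injective ha.injective, ncard_range_of_injective ha'.injective]
      using congrArg ncard hra
  obtain rfl := (ha.range_inj ha').mp hra
  obtain rfl := (hb.range_inj hb').mp hrb
  have hhole : ∀ i j, t (a i, b j) = σ ↔ (j, i) = (j₀, i₀) := by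
    simp [← hσ, ht.eq_iff, ha.injective.eq_iff, hb.injective.eq_iff, and_comm]
  obtain ⟨rfl, rfl⟩ : j₀' = j₀ ∧ i₀' = i₀ := by simpa using (hhole i₀' j₀').mp hσ'
  by_contra hdd
  refine (linearIndependent_or_linearIndependent_of_minor
    (v := fun j i => update h σ d (t (a i, b j))) (w := fun j i => update h σ d' (t (a i, b j)))
    hminor ?_ ?_).elim hsing hsing'
  · intro j i hji
    simp [update, (hhole i j).not.mpr hji]
  · simpa [hσ] using hdd

theorem mk_badValues_lt [Infinite D] (ht : Injective t) {σ : T} (hσ : #(Iio σ) < #D)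
    (h : T → D) : #(badValues t σ h) < #D := by
  have hIic : #(Iic σ) < #D := by
    rw [← Iio_insert]
    exact mk_insert_le.trans_lt
      (add_lt_of_lt (aleph0_le_mk D) hσ (one_lt_aleph0.trans_le (aleph0_le_mk D)))
  calc #(badValues t σ h) ≤ #{F : Finset (ι × κ) | ↑F ⊆ t ⁻¹' Iic σ} :=
        mk_iUnion_le_of_subsingleton fun _ => badValuesOn_subsingleton ht σ h _
    _ < #D := mk_setOf_finset_subset_lt (aleph0_le_mk D)
        ((mk_preimage_of_injective t _ ht).trans_lt hIic)

theorem linearIndependent_of_forall_notMem_badValues {g : T → D}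
    (hg : ∀ σ, g σ ∉ badValues t σ (fun τ => if τ < σ then g τ else 0)) {n : ℕ}
    {a : Fin (n + 1) → ι} {b : Fin (n + 1) → κ} (ha : StrictMono a) (hb : StrictMono b)
    (hminors : ∀ i₀ j₀ : Fin (n + 1),
      LinearIndependent D fun j i => g (t (a (i₀.succAbove i), b (j₀.succAbove j)))) :
    LinearIndependent D fun j i => g (t (a i, b j)) := by
  obtain ⟨⟨i₀, j₀⟩, -, hmax⟩ := Finset.exists_max_image Finset.univ
    (fun p : Fin (n + 1) × Fin (n + 1) => t (a p.1, b p.2)) Finset.univ_nonempty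
  set σ := t (a i₀, b j₀)
  have hentry : ∀ i j,
      update (fun τ => if τ < σ then g τ else 0) σ (g σ) (t (a i, b j)) = g (t (a i, b j)) := by
    intro i j
    rcases (hmax (i, j) (Finset.mem_univ _)).lt_or_eq with hlt | heq
    · simp [hlt.ne, hlt]
    · simp [heq]
  by_contra hsing
  classical
  refine hg σ (mem_iUnion.mpr ⟨⟨Finset.univ.image (Prod.map a b), ?_⟩,
    n, a, b, i₀, j₀, ha, hb, ?_, rfl, ?_, ?_⟩)
  · intro p hp
    obtain ⟨q, -, rfl⟩ := Finset.mem_image.mp hp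
    exact hmax q (Finset.mem_univ _)
  · simp [range_prodMap]
  · simpa only [hentry] using hminors i₀ j₀
  · simpa only [hentry] using hsing

theorem exists_stronglyLinearIndependent_of_injective [Infinite D] [WellFoundedLT T]
    (ht : Injective t) (hsmall : ∀ σ : T, #(Iio σ) < #D) :
    ∃ x : ι → κ → D, StronglyLinearIndependent D x := by
  obtain ⟨g, hg⟩ := WellFoundedLT.exists_forall_restrict 0
    (fun σ h d => d ∉ badValues t σ h)
    (fun σ h => compl_nonempty_of_mk_lt_mk (mk_badValues_lt ht (hsmall σ) h))
  refine ⟨fun i j => g (t (i, j)), fun n => ?_⟩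
  induction n with
  | zero => exact fun _ _ _ _ => linearIndependent_empty_type
  | succ n ih =>
    exact fun a b ha hb => linearIndependent_of_forall_notMem_badValues hg ha hb
      fun i₀ j₀ => ih _ _ (ha.comp (Fin.strictMono_succAbove i₀))
        (hb.comp (Fin.strictMono_succAbove j₀))

end Construction

/-- Let `D` be an infinite division ring and `κ = card D`.
There is a `κ × κ` array `x` of elements of `D` (indexed by the ordinals below
`κ`) which is strongly linearly independent: for every `n` and all strictly
increasing `n`-tuples `α`, `β` of indices, the `n` column vectors
`(x (α i) (β j))_{i} ∈ D^n` (for `j = 0, …, n-1`) are left linearly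
independent over `D`, i.e. the `n × n` matrix `(x (α i) (β j))` is
nonsingular. -/
theorem exists_strongly_linearly_independent (D : Type u) [DivisionRing D]
    [Infinite D] :
    ∃ x : (Cardinal.mk D).ord.ToType → (Cardinal.mk D).ord.ToType → D,
      ∀ (n : ℕ) (α β : Fin n → (Cardinal.mk D).ord.ToType),
        StrictMono α → StrictMono β →
        LinearIndependent D (fun j i : Fin n => x (α i) (β j)) := by
  have hsq : #((#D).ord.ToType × (#D).ord.ToType) = #(#D).ord.ToType := by
    simp [mul_eq_self (aleph0_le_mk D)]
  obtain ⟨e⟩ := Cardinal.eq.mp hsq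
  exact exists_stronglyLinearIndependent_of_injective e.injective mk_Iio_toType_ord_lt
end

section
/- Let D be a finite division ring (hence a finite field), I a set, and F a filter on I which is not the intersection of finitely many ultrafilters on I. Then dim_D(D^I/F) = card(D^I/F). -/
universe u

/-! If `D^I/F` is infinite, its dimension equals its cardinality as for any infinite vector
space over a finite field. If it is finite, an ultrafilter `U` finer than `F` is determined by
the classes in `D^I/F` of the indicator functions of the members of `U`, so there are only
finitely many such `U`; and `F` is the intersection of the ultrafilters finer than it. -/

open Cardinal

theorem Module.Free.rank_eq_mk_of_finite_of_infinite (R M : Type u) [Ring R]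
    [StrongRankCondition R] [Finite R] [AddCommGroup M] [Module R M] [Module.Free R M]
    [Infinite M] : Module.rank R M = #M := by
  let B := Module.Free.ChooseBasisIndex R M
  let e : M ≃ (B →₀ R) := (Module.Free.chooseBasis R M).repr.toEquiv
  have : Infinite B := by
    by_contra hB
    have : Finite B := not_infinite_iff_finite.mp hB
    have : Finite (B →₀ R) := Finite.of_equiv _ Finsupp.equivFunOnFinite.symm
    exact not_finite_iff_infinite.mpr ‹Infinite M› (Finite.of_equiv _ e.symm)
  have : Nontrivial R := nontrivial_of_invariantBasisNumber R
  calc Module.rank R M = #B := Module.Free.rank_eq_card_chooseBasisIndex R M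
    _ = #(B →₀ R) := by
      rw [mk_finsupp_of_infinite, max_eq_left ((lt_aleph0_of_finite R).le.trans (aleph0_le_mk B))]
    _ = #M := (mk_congr e).symm

theorem Filter.exists_eq_iSup_fin_ultrafilter_of_finite {α : Type*} (f : Filter α)
    [Finite {g : Ultrafilter α // ↑g ≤ f}] :
    ∃ (n : ℕ) (U : Fin n → Ultrafilter α), f = ⨆ m, (U m : Filter α) := by
  obtain ⟨n, ⟨e⟩⟩ := Finite.exists_equiv_fin {g : Ultrafilter α // ↑g ≤ f}
  refine ⟨n, fun m => (e.symm m).1, ?_⟩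
  calc f = ⨆ (g : Ultrafilter α) (_ : ↑g ≤ f), (g : Filter α) := (iSup_ultrafilter_le_eq f).symm
    _ = ⨆ g : {g : Ultrafilter α // ↑g ≤ f}, (g.1 : Filter α) := iSup_subtype'
    _ = ⨆ m, ((e.symm m).1 : Filter α) := (e.symm.surjective.iSup_congr _ fun _ => rfl).symm

section ReducedPower

variable {D : Type u} [DivisionRing D] {I : Type u} {F : Filter I}

variable (D F) in
abbrev ReducedPower : Type u := (I → D) ⧸ zeroSetSubmodule D F

theorem eventuallyEq_of_mk_eq {f g : I → D}
    (h : (Submodule.Quotient.mk f : ReducedPower D F) = Submodule.Quotient.mk g) :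
    f =ᶠ[F] g :=
  Filter.mem_of_superset ((Submodule.Quotient.eq _).mp h) fun _ hi => sub_eq_zero.mp hi

variable (D F) in
noncomputable def indicatorClass (s : Set I) : ReducedPower D F :=
  Submodule.Quotient.mk (s.indicator 1)

theorem mem_of_indicatorClass_eq {U : Ultrafilter I} (hU : ↑U ≤ F) {s t : Set I}
    (h : indicatorClass D F t = indicatorClass D F s) (ht : t ∈ U) : s ∈ U := by
  refine Filter.mem_of_superset (U.inter_mem ht (hU (eventuallyEq_of_mk_eq h)))
    fun i ⟨hit, hts⟩ => ?_
  by_contra his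
  simp [Set.indicator_of_mem hit, Set.indicator_of_notMem his] at hts

theorem finite_ultrafilter_le_of_finite [Finite (ReducedPower D F)] :
    Finite {U : Ultrafilter I // ↑U ≤ F} := by
  refine Finite.of_injective (fun U => indicatorClass D F '' U.1.sets) fun U V hUV => ?_
  refine Subtype.ext (Ultrafilter.coe_le_coe.mp fun s hs => ?_)
  obtain ⟨t, ht, hts⟩ : indicatorClass D F s ∈ indicatorClass D F '' U.1.sets :=
    (Set.ext_iff.mp hUV _).mpr ⟨s, hs, rfl⟩
  exact mem_of_indicatorClass_eq U.2 hts ht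

end ReducedPower

/-- Let `D` be a finite division ring (hence a finite field),
`I` a set, and `F` a filter on `I` which is not the intersection of finitely
many ultrafilters on `I`.  Then the dimension of the reduced power `D^I/F`
over `D` equals its cardinality. -/
theorem rank_reduced_power_eq_card_finite_field (D : Type u) [DivisionRing D]
    [Finite D] {I : Type u} (F : Filter I)
    (hF : ¬ ∃ (n : ℕ) (U : Fin n → Ultrafilter I), F = ⨆ m, (U m : Filter I)) :
    Module.rank D ((I → D) ⧸ zeroSetSubmodule D F)
      = Cardinal.mk ((I → D) ⧸ zeroSetSubmodule D F) := by
  rcases finite_or_infinite (ReducedPower D F) with hfin | hinf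
  · have : Finite {U : Ultrafilter I // ↑U ≤ F} := finite_ultrafilter_le_of_finite (D := D)
    exact absurd F.exists_eq_iSup_fin_ultrafilter_of_finite hF
  · exact Module.Free.rank_eq_mk_of_finite_of_infinite D _
end
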